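/- arXiv:1508.07206 — 8 statements merged into one kernel-verified Lean document; each statement's English description precedes it below -/
import Mathlib

section
/- Let R be a finite commutative local ring with maximal ideal m. Write r = #R and m' = #m. Then the cardinality of the group GL₂(R) of invertible 2×2 matrices over R is (r² − m'²)·r·(r − m'). -/
/-!
Reduction modulo `m` is a surjective homomorphism `GL₂(R) → GL₂(k)` onto the general linear
group of the residue field `k = R/m`: a matrix over a local ring is invertible exactly when its
determinant is a unit, i.e. when its reduction is invertible, so any lift of an invertible
matrix over `k` is invertible. For the same reason the kernel consists of all `1 + A` with `A`
entrywise in `m`, so it has `m'⁴` elements. With `q = #k`, `#GL₂(k) = (q² - 1)(q² - q)` and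
`r = m' q` this gives `#GL₂(R) = m'⁴ (q² - 1)(q² - q) = (r² - m'²) r (r - m')`.
-/

open Matrix

namespace Matrix

variable {n R S : Type*} [DecidableEq n] [CommRing R] [CommRing S] (f : R →+* S)

theorem map_eq_one_iff_forall_sub_mem_ker {M : Matrix n n R} :
    M.map f = 1 ↔ ∀ i j, M i j - (1 : Matrix n n R) i j ∈ RingHom.ker f := by
  simp only [← Matrix.ext_iff, map_apply, RingHom.mem_ker, map_sub, Matrix.one_apply]
  refine forall₂_congr fun i j => ?_
  split_ifs <;> simp [sub_eq_zero]

variable [Fintype n]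

instance isLocalHom_mapMatrix [IsLocalHom f] : IsLocalHom (f.mapMatrix (m := n)) where
  map_nonunit M h := by
    rw [isUnit_iff_isUnit_det] at h ⊢
    exact isUnit_of_map_unit f _ (by rwa [RingHom.map_det])

namespace GeneralLinearGroup

theorem mem_ker_map_iff {g : GL n R} :
    g ∈ (map f).ker ↔ ∀ i j, g i j - (1 : Matrix n n R) i j ∈ RingHom.ker f := by
  rw [MonoidHom.mem_ker, ← map_eq_one_iff_forall_sub_mem_ker, ← Units.val_inj]
  rfl

variable [IsLocalHom f]

theorem map_surjective (hf : Function.Surjective f) : Function.Surjective (map (n := n) f) := by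
  intro N
  choose lift hlift using hf
  have hunit : IsUnit ((N : Matrix n n S).map lift) :=
    isUnit_of_map_unit f.mapMatrix _ (by simp [Matrix.map_map, Function.comp_def, hlift])
  exact ⟨hunit.unit, Units.ext <| by ext; simp [map, hlift]⟩

noncomputable def kerMapEquiv : (map (n := n) f).ker ≃ (n → n → RingHom.ker f) where
  toFun g i j := ⟨g.1 i j - (1 : Matrix n n R) i j, (mem_ker_map_iff f).1 g.2 i j⟩
  invFun A :=
    have hA : f.mapMatrix (1 + of fun i j => (A i j : R)) = 1 :=
      (map_eq_one_iff_forall_sub_mem_ker f).2 fun i j => by simp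
    ⟨(isUnit_of_map_unit f.mapMatrix _ (hA ▸ isUnit_one)).unit,
      (mem_ker_map_iff f).2 fun i j => by simp⟩
  left_inv g := by ext; simp
  right_inv A := by ext; simp

theorem card_eq_card_mul_card_ker_pow (hf : Function.Surjective f) :
    Nat.card (GL n R) = Nat.card (GL n S) * Nat.card (RingHom.ker f) ^ (Fintype.card n ^ 2) := by
  rw [(map f).ker.card_eq_card_quotient_mul_card_subgroup,
    Nat.card_congr (QuotientGroup.quotientKerEquivOfSurjective _ (map_surjective f hf)).toEquiv,
    Nat.card_congr (kerMapEquiv f), Nat.card_fun, Nat.card_fun, ← pow_mul,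
    Nat.card_eq_fintype_card (α := n), sq]

end GeneralLinearGroup

end Matrix

namespace IsLocalRing

variable (R : Type*) [CommRing R] [IsLocalRing R]

theorem card_eq_card_maximalIdeal_mul_card_residueField :
    Nat.card R = Nat.card (maximalIdeal R) * Nat.card (ResidueField R) := by
  rw [(maximalIdeal R).toAddSubgroup.card_eq_card_quotient_mul_card_addSubgroup, mul_comm]
  rfl

theorem card_GL (n : Type*) [Fintype n] [DecidableEq n] :
    Nat.card (GL n R) =
      Nat.card (GL n (ResidueField R)) * Nat.card (maximalIdeal R) ^ (Fintype.card n ^ 2) := by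
  rw [GeneralLinearGroup.card_eq_card_mul_card_ker_pow (residue R) residue_surjective, ker_residue]

end IsLocalRing

/-- Cardinality of `GL₂` over a finite commutative local ring `R`:
if `r = #R` and `m' = #m` (the maximal ideal), then
`#GL₂(R) = (r² − m'²) · r · (r − m')`. -/
theorem stmt_0 (R : Type*) [CommRing R] [IsLocalRing R] [Fintype R] :
    Nat.card (GL (Fin 2) R) =
      (Nat.card R ^ 2 - Nat.card (IsLocalRing.maximalIdeal R) ^ 2) * Nat.card R *
        (Nat.card R - Nat.card (IsLocalRing.maximalIdeal R)) := by
  have : Finite (IsLocalRing.ResidueField R) :=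
    Finite.of_surjective _ IsLocalRing.residue_surjective
  let : Fintype (IsLocalRing.ResidueField R) := Fintype.ofFinite _
  rw [IsLocalRing.card_GL, IsLocalRing.card_eq_card_maximalIdeal_mul_card_residueField R,
    Matrix.card_GL_field, Fin.prod_univ_two, ← Nat.card_eq_fintype_card]
  simp only [Fintype.card_fin, Fin.val_zero, Fin.val_one, pow_zero, pow_one]
  set q := Nat.card (IsLocalRing.ResidueField R)
  set a := Nat.card (IsLocalRing.maximalIdeal R)
  have hq : 1 ≤ q := Nat.card_pos
  have ha : a ≤ a * q := Nat.le_mul_of_pos_right a hq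
  zify [Nat.one_le_pow _ _ hq, Nat.le_self_pow two_ne_zero q, ha, Nat.pow_le_pow_left ha 2]
  ring
end

section
/- Let ℓ be an odd prime, k a positive integer, and D an integer that is a quadratic nonresidue modulo ℓ. Let R_k = (ℤ/ℓᵏℤ)[X]/(X² − D) and let 𝒜_{ℓᵏ,I} = {σ ∈ GL₂(R_k) | det σ lies in the image of (ℤ/ℓᵏℤ)^× in R_k}. Then #𝒜_{ℓᵏ,I} = ℓ^{7k−5}(ℓ⁴ − 1)(ℓ − 1). -/
/-!
Reduction modulo `ℓ` is a surjection `R_k → 𝔽_ℓ[√D] ≅ 𝔽_{ℓ²}` whose kernel consists of nilpotents,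
so an element (and, via the determinant, a matrix) over `R_k` is invertible as soon as its
reduction is. Hence `#R_kˣ = (ℓ² - 1) ℓ^{2(k-1)}` and `#GL₂(R_k) = #GL₂(𝔽_{ℓ²}) ℓ^{8(k-1)}`.
As `det : GL₂(R_k) → R_kˣ` is surjective, the preimage of the subgroup `(ℤ/ℓᵏ)ˣ`, of order
`φ(ℓᵏ) = ℓ^{k-1}(ℓ - 1)`, has order `#GL₂(R_k) · φ(ℓᵏ) / #R_kˣ`.
-/

open Matrix Polynomial

/-- The ring `R_k = (ℤ/ℓᵏℤ)[X]/(X² − D)`. -/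
abbrev InertRing (ℓ k : ℕ) (D : ℤ) : Type :=
  AdjoinRoot ((X : Polynomial (ZMod (ℓ ^ k))) ^ 2 - C (D : ZMod (ℓ ^ k)))

namespace Subgroup

variable {G K : Type*} [Group G] [Group K] {f : G →* K}

theorem card_comap_mul_card (hf : Function.Surjective f) (H : Subgroup K) :
    Nat.card (H.comap f) * Nat.card K = Nat.card G * Nat.card H := by
  rw [← H.card_mul_index, ← (H.comap f).card_mul_index, index_comap_of_surjective H hf]
  ring

end Subgroup

theorem IsLocalHom.of_surjective_of_isNilpotent {A B : Type*} [CommRing A] [Ring B]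
    {f : A →+* B} (hf : Function.Surjective f) (hker : ∀ a, f a = 0 → IsNilpotent a) :
    IsLocalHom f where
  map_nonunit a ha := by
    obtain ⟨b, hb⟩ := hf ↑ha.unit⁻¹
    have hab : f (a * b - 1) = 0 := by simp [hb]
    have : IsUnit (a * b) := by simpa using (hker _ hab).isUnit_add_one
    exact isUnit_of_mul_isUnit_left this

namespace RingHom

section Units

variable {A B : Type*} [Ring A] [Ring B] (f : A →+* B)

theorem card_eq_mul_card_ker (hf : Function.Surjective f) :
    Nat.card A = Nat.card B * Nat.card (ker f) := by
  rw [AddSubgroup.card_eq_card_quotient_mul_card_addSubgroup (f : A →+ B).ker,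
    Nat.card_congr (QuotientAddGroup.quotientKerEquivOfSurjective _ hf).toEquiv]
  rfl

variable [IsLocalHom f]

noncomputable def unitsMapKerEquiv : (Units.map (f : A →* B)).ker ≃ ker f where
  toFun u := ⟨(u : Aˣ) - 1, by
    have hu : f (u : Aˣ) = 1 := congrArg Units.val u.2
    simp [mem_ker, hu]⟩
  invFun x := ⟨(IsUnit.of_map f (1 + x.1) (by simp [mem_ker.mp x.2])).unit,
    Units.ext (by simp [mem_ker.mp x.2])⟩
  left_inv u := by ext; simp
  right_inv x := by ext; simp

theorem card_units_eq_mul_card_ker (hf : Function.Surjective f) :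
    Nat.card Aˣ = Nat.card Bˣ * Nat.card (ker f) := by
  have hsurj : Function.Surjective (Units.map (f : A →* B)) := fun v => by
    obtain ⟨a, ha⟩ := hf v
    exact ⟨(IsUnit.of_map f a (ha ▸ v.isUnit)).unit, Units.ext ha⟩
  rw [Subgroup.card_eq_card_quotient_mul_card_subgroup (Units.map (f : A →* B)).ker,
    Nat.card_congr (QuotientGroup.quotientKerEquivOfSurjective _ hsurj).toEquiv,
    Nat.card_congr f.unitsMapKerEquiv]

end Units

section Matrix

variable {n A B : Type*} [Fintype n] [DecidableEq n]

def kerMapMatrixEquiv [Ring A] [Ring B] (f : A →+* B) :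
    ker (f.mapMatrix : Matrix n n A →+* Matrix n n B) ≃ (n → n → ker f) where
  toFun M i j := ⟨M.1 i j, by simpa using Matrix.ext_iff.mpr (mem_ker.mp M.2) i j⟩
  invFun N := ⟨Matrix.of fun i j => N i j,
    mem_ker.mpr (by ext i j; simpa using mem_ker.mp (N i j).2)⟩
  left_inv _ := rfl
  right_inv _ := rfl

theorem mapMatrix_surjective [Ring A] [Ring B] {f : A →+* B} (hf : Function.Surjective f) :
    Function.Surjective (f.mapMatrix : Matrix n n A →+* Matrix n n B) := fun M =>
  ⟨M.map (Function.surjInv hf), by ext; simp [Function.surjInv_eq hf]⟩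

variable [CommRing A] [CommRing B] (f : A →+* B) [IsLocalHom f]

instance isLocalHom_mapMatrix : IsLocalHom (f.mapMatrix : Matrix n n A →+* Matrix n n B) where
  map_nonunit M hM := by
    rw [Matrix.isUnit_iff_isUnit_det, ← map_det] at hM
    exact (Matrix.isUnit_iff_isUnit_det M).mpr (hM.of_map f _)

theorem card_GL_eq_mul (hf : Function.Surjective f) :
    Nat.card (GL n A) = Nat.card (GL n B) * Nat.card (ker f) ^ (Fintype.card n ^ 2) := by
  rw [card_units_eq_mul_card_ker _ (mapMatrix_surjective hf), Nat.card_congr (kerMapMatrixEquiv f),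
    Nat.card_fun, Nat.card_fun, Nat.card_eq_fintype_card (α := n), ← pow_mul, sq]

end Matrix

end RingHom

namespace AdjoinRoot

variable {R S : Type*} [CommRing R] [CommRing S]

theorem natCard_eq_pow_natDegree {g : R[X]} (hg : g.Monic) :
    Nat.card (AdjoinRoot g) = Nat.card R ^ g.natDegree := by
  rw [Nat.card_congr (powerBasis' hg).basis.equivFun.toEquiv, Nat.card_fun, powerBasis'_dim,
    Nat.card_eq_fintype_card (α := Fin _), Fintype.card_fin]

theorem natCard_X_pow_sub_C [Nontrivial R] {n : ℕ} (hn : n ≠ 0) (a : R) :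
    Nat.card (AdjoinRoot (X ^ n - C a)) = Nat.card R ^ n := by
  rw [natCard_eq_pow_natDegree (monic_X_pow_sub_C a hn), natDegree_X_pow_sub_C]

theorem map_mk (f : R →+* S) (p : R[X]) (q : S[X]) (h : q ∣ p.map f) (g : R[X]) :
    map f p q h (mk p g) = mk q (g.map f) := by
  rw [map, lift_mk, ← aeval_eq, aeval_def, eval₂_map, algebraMap_eq]

theorem map_surjective {f : R →+* S} (hf : Function.Surjective f) (p : R[X]) (q : S[X])
    (h : q ∣ p.map f) : Function.Surjective (map f p q h) := by
  intro y
  obtain ⟨g', rfl⟩ := mk_surjective y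
  obtain ⟨g, rfl⟩ := Polynomial.map_surjective f hf g'
  exact ⟨mk p g, map_mk f p q h g⟩

/-- If `mk p g` maps to zero then `g - p * r` has nilpotent coefficients for some `r`. -/
theorem isNilpotent_of_map_eq_zero {f : R →+* S} (hf : Function.Surjective f)
    (hker : ∀ r, f r = 0 → IsNilpotent r) {p : R[X]} {q : S[X]} (h : q ∣ p.map f)
    (h' : p.map f ∣ q) {x : AdjoinRoot p} (hx : map f p q h x = 0) : IsNilpotent x := by
  obtain ⟨g, rfl⟩ := mk_surjective x
  rw [map_mk, mk_eq_zero] at hx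
  obtain ⟨r', hr'⟩ := h'.trans hx
  obtain ⟨r, rfl⟩ := Polynomial.map_surjective f hf r'
  have hmap : (g - p * r).map f = 0 := by simp [hr']
  have hnil : IsNilpotent (g - p * r) := Polynomial.isNilpotent_iff.mpr fun i =>
    hker _ (by simpa only [coeff_map, coeff_zero] using congrArg (coeff · i) hmap)
  simpa using hnil.map (mk p)

end AdjoinRoot

theorem ZMod.isNilpotent_of_castHom_eq_zero {p k : ℕ} (hk : k ≠ 0) {a : ZMod (p ^ k)}
    (ha : ZMod.castHom (dvd_pow_self p hk) (ZMod p) a = 0) : IsNilpotent a := by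
  obtain ⟨n, rfl⟩ := ZMod.intCast_surjective a
  rw [map_intCast, ZMod.intCast_zmod_eq_zero_iff_dvd] at ha
  refine ⟨k, ?_⟩
  rw [← Int.cast_pow, ZMod.intCast_zmod_eq_zero_iff_dvd, Nat.cast_pow]
  exact pow_dvd_pow_of_dvd ha k

theorem Polynomial.irreducible_X_sq_sub_C {K : Type*} [Field K] {a : K} (ha : ¬IsSquare a) :
    Irreducible (X ^ 2 - C a) :=
  X_pow_sub_C_irreducible_of_prime Nat.prime_two fun b hb => ha ⟨b, by rw [← hb, sq]⟩

theorem Matrix.GeneralLinearGroup.setOf_det_eq_algebraMap {n A B : Type*} [Fintype n]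
    [DecidableEq n] [CommRing A] [CommRing B] [Algebra A B] :
    {σ : GL n B | ∃ u : Aˣ, (σ : Matrix n n B).det = algebraMap A B u} =
      ((Units.map (algebraMap A B).toMonoidHom).range.comap (det (n := n)) : Set (GL n B)) := by
  ext σ
  simp [Units.ext_iff, eq_comm]

namespace InertRing

variable {ℓ k : ℕ} {D : ℤ}

theorem map_castHom_X_sq_sub_C (hk : k ≠ 0) :
    ((X : (ZMod (ℓ ^ k))[X]) ^ 2 - C (D : ZMod (ℓ ^ k))).map
      (ZMod.castHom (dvd_pow_self ℓ hk) (ZMod ℓ)) = X ^ 2 - C (D : ZMod ℓ) := by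
  simp

noncomputable def reduction (ℓ : ℕ) (D : ℤ) (hk : k ≠ 0) :
    InertRing ℓ k D →+* AdjoinRoot ((X : (ZMod ℓ)[X]) ^ 2 - C (D : ZMod ℓ)) :=
  AdjoinRoot.map _ _ _ (map_castHom_X_sq_sub_C hk).symm.dvd

theorem reduction_surjective (hk : k ≠ 0) : Function.Surjective (reduction ℓ D hk) :=
  AdjoinRoot.map_surjective (ZMod.castHom_surjective _) _ _ _

instance isLocalHom_reduction (hk : k ≠ 0) : IsLocalHom (reduction ℓ D hk) :=
  .of_surjective_of_isNilpotent (reduction_surjective hk) fun _ hx =>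
    AdjoinRoot.isNilpotent_of_map_eq_zero (ZMod.castHom_surjective _)
      (fun _ => ZMod.isNilpotent_of_castHom_eq_zero hk) _ (map_castHom_X_sq_sub_C hk).dvd hx

variable [hℓ : Fact ℓ.Prime]

theorem natCard_residue :
    Nat.card (AdjoinRoot ((X : (ZMod ℓ)[X]) ^ 2 - C (D : ZMod ℓ))) = ℓ ^ 2 := by
  rw [AdjoinRoot.natCard_X_pow_sub_C two_ne_zero, Nat.card_zmod]

theorem natCard_ker_reduction (hk : k ≠ 0) :
    Nat.card (RingHom.ker (reduction ℓ D hk)) = ℓ ^ (2 * (k - 1)) := by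
  have : Fact (1 < ℓ ^ k) := ⟨Nat.one_lt_pow hk hℓ.out.one_lt⟩
  have h := (reduction ℓ D hk).card_eq_mul_card_ker (reduction_surjective hk)
  rw [natCard_residue (ℓ := ℓ), AdjoinRoot.natCard_X_pow_sub_C two_ne_zero, Nat.card_zmod] at h
  refine Nat.eq_of_mul_eq_mul_left (pow_pos hℓ.out.pos 2) (h.symm.trans ?_)
  rw [← pow_mul, ← pow_add]
  congr 1
  omega

theorem natCard_range_unitsMap_algebraMap (hk : k ≠ 0) :
    Nat.card (Units.map (algebraMap (ZMod (ℓ ^ k)) (InertRing ℓ k D)).toMonoidHom).range =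
      ℓ ^ (k - 1) * (ℓ - 1) := by
  have : NeZero (ℓ ^ k) := ⟨pow_ne_zero k hℓ.out.ne_zero⟩
  have : Fact (1 < ℓ ^ k) := ⟨Nat.one_lt_pow hk hℓ.out.one_lt⟩
  have hmonic := monic_X_pow_sub_C (D : ZMod (ℓ ^ k)) two_ne_zero
  have := hmonic.free_adjoinRoot
  have : Nontrivial (InertRing ℓ k D) := Module.nontrivial_of_finrank_pos (R := ZMod (ℓ ^ k))
    (by rw [(AdjoinRoot.powerBasis' hmonic).finrank, AdjoinRoot.powerBasis'_dim,
      natDegree_X_pow_sub_C]; exact two_pos)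
  have hinj := Units.map_injective (FaithfulSMul.algebraMap_injective (ZMod (ℓ ^ k))
    (InertRing ℓ k D))
  rw [← Nat.card_congr (MonoidHom.ofInjective hinj).toEquiv, Nat.card_eq_fintype_card,
    ZMod.card_units_eq_totient, Nat.totient_prime_pow hℓ.out (Nat.pos_of_ne_zero hk)]

variable [Fact (Irreducible ((X : (ZMod ℓ)[X]) ^ 2 - C (D : ZMod ℓ)))]

theorem natCard_units (hk : k ≠ 0) :
    Nat.card (InertRing ℓ k D)ˣ = (ℓ ^ 2 - 1) * ℓ ^ (2 * (k - 1)) := by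
  rw [(reduction ℓ D hk).card_units_eq_mul_card_ker (reduction_surjective hk), Nat.card_units,
    natCard_residue, natCard_ker_reduction]

theorem natCard_GL (hk : k ≠ 0) :
    Nat.card (GL (Fin 2) (InertRing ℓ k D)) =
      (ℓ ^ 4 - 1) * (ℓ ^ 4 - ℓ ^ 2) * ℓ ^ (8 * (k - 1)) := by
  have : Finite (AdjoinRoot ((X : (ZMod ℓ)[X]) ^ 2 - C (D : ZMod ℓ))) :=
    Nat.finite_of_card_ne_zero (by rw [natCard_residue]; exact (pow_pos hℓ.out.pos 2).ne')
  have := Fintype.ofFinite (AdjoinRoot ((X : (ZMod ℓ)[X]) ^ 2 - C (D : ZMod ℓ)))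
  rw [(reduction ℓ D hk).card_GL_eq_mul (reduction_surjective hk), Matrix.card_GL_field,
    ← Nat.card_eq_fintype_card, natCard_residue, natCard_ker_reduction, Fin.prod_univ_two,
    Fintype.card_fin]
  simp only [Fin.val_zero, Fin.val_one, pow_zero, pow_one, ← pow_mul]
  ring_nf

end InertRing

theorem stmt_2_general (ℓ k : ℕ) (hℓ : ℓ.Prime) (hk : 1 ≤ k) (D : ℤ)
    (hD : ¬ IsSquare (D : ZMod ℓ)) :
    Nat.card {σ : GL (Fin 2) (InertRing ℓ k D) |
        ∃ u : (ZMod (ℓ ^ k))ˣ,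
          (σ : Matrix (Fin 2) (Fin 2) (InertRing ℓ k D)).det =
            algebraMap (ZMod (ℓ ^ k)) (InertRing ℓ k D) (u : ZMod (ℓ ^ k))} =
      ℓ ^ (7 * k - 5) * (ℓ ^ 4 - 1) * (ℓ - 1) := by
  have hk0 : k ≠ 0 := by omega
  have : Fact ℓ.Prime := ⟨hℓ⟩
  have : Fact (Irreducible ((X : (ZMod ℓ)[X]) ^ 2 - C (D : ZMod ℓ))) :=
    ⟨irreducible_X_sq_sub_C hD⟩
  have hcount := Subgroup.card_comap_mul_card (GeneralLinearGroup.det_surjective (n := Fin 2))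
    (Units.map (algebraMap (ZMod (ℓ ^ k)) (InertRing ℓ k D)).toMonoidHom).range
  rw [InertRing.natCard_units hk0, InertRing.natCard_GL hk0,
    InertRing.natCard_range_unitsMap_algebraMap hk0] at hcount
  rw [GeneralLinearGroup.setOf_det_eq_algebraMap, SetLike.coe_sort_coe]
  obtain ⟨m, rfl⟩ : ∃ m, k = m + 1 := ⟨k - 1, by omega⟩
  rw [Nat.add_sub_cancel] at hcount
  rw [show 7 * (m + 1) - 5 = 7 * m + 2 by omega]
  refine Nat.eq_of_mul_eq_mul_right
    (Nat.mul_pos (Nat.sub_pos_of_lt (Nat.one_lt_pow two_ne_zero hℓ.one_lt)) (pow_pos hℓ.pos _))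
    (hcount.trans ?_)
  rw [show ℓ ^ 4 - ℓ ^ 2 = ℓ ^ 2 * (ℓ ^ 2 - 1) by rw [Nat.mul_sub_one, ← pow_add]]
  ring

/-- For an odd prime `ℓ`, `k ≥ 1` and `D` a quadratic nonresidue modulo `ℓ`,
the set `𝒜_{ℓᵏ,I}` of `σ ∈ GL₂(R_k)` whose determinant lies in the image of
`(ℤ/ℓᵏℤ)ˣ` has cardinality `ℓ^(7k−5)(ℓ⁴ − 1)(ℓ − 1)`. -/
theorem stmt_2 (ℓ k : ℕ) (hℓ : ℓ.Prime) (hodd : ℓ ≠ 2) (hk : 1 ≤ k) (D : ℤ)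
    (hD : ¬ IsSquare (D : ZMod ℓ)) :
    Nat.card {σ : GL (Fin 2) (InertRing ℓ k D) |
        ∃ u : (ZMod (ℓ ^ k))ˣ,
          (σ : Matrix (Fin 2) (Fin 2) (InertRing ℓ k D)).det =
            algebraMap (ZMod (ℓ ^ k)) (InertRing ℓ k D) (u : ZMod (ℓ ^ k))} =
      ℓ ^ (7 * k - 5) * (ℓ ^ 4 - 1) * (ℓ - 1) :=
  stmt_2_general ℓ k hℓ hk D hD
end

section
/- Let T, Φ and T_ε be as follows: T = {(x,y) ∈ ℝ² | y + 2 > |2x| and 4y < x² + 8}, Φ(x,y) = (1/(2π²))·√((y − 2x + 2)(y + 2x + 2)/(x² − 4y + 8)), and T_ε = {(x,y) ∈ T | √(x²/4 − y + 2) < ε}. For 0 < ε < 2 let T²_ε = {(x,y) ∈ T_ε | 4 − 2ε < x < 4}. Then 2·∫_{T²_ε} Φ(x,y) dx dy = O(ε²) as ε → 0⁺; that is, there exist C > 0 and ε₀ > 0 such that 2·∫_{T²_ε} Φ ≤ C·ε² for all 0 < ε < ε₀. -/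
open MeasureTheory Real Filter Set

/-- The region `T_ε ⊆ T` of the plane. -/
def Teps (ε : ℝ) : Set (ℝ × ℝ) :=
  {p : ℝ × ℝ | (p.2 + 2 > |2 * p.1| ∧ 4 * p.2 < p.1 ^ 2 + 8) ∧
    Real.sqrt (p.1 ^ 2 / 4 - p.2 + 2) < ε}

/-- The region `T²_ε = {(x,y) ∈ T_ε | 4 − 2ε < x < 4}`. -/
def Teps2 (ε : ℝ) : Set (ℝ × ℝ) :=
  {p : ℝ × ℝ | p ∈ Teps ε ∧ 4 - 2 * ε < p.1 ∧ p.1 < 4}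

/-- The density `Φ` on `T`. -/
noncomputable def Phi (p : ℝ × ℝ) : ℝ :=
  (1 / (2 * π ^ 2)) *
    Real.sqrt ((p.2 - 2 * p.1 + 2) * (p.2 + 2 * p.1 + 2) / (p.1 ^ 2 - 4 * p.2 + 8))


/-! The line `y = 2x - 2` is tangent to the parabola `4y = x² + 8` at `(4, 6)`, so on `T²_ε` the
factor `y - 2x + 2` is at most `(x - 4)² / 4 < ε²`, while the other factors stay bounded; hence
`Φ ≤ 2ε / √(x²/4 - y + 2)`. This inverse-square-root singularity has integral `O(1)` on every
vertical fibre, and the fibres range over an interval of length `2ε`, giving `O(ε²)`. -/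

lemma hasDerivAt_neg_two_mul_sqrt_sub {c y : ℝ} (hy : y < c) :
    HasDerivAt (fun t => -2 * √(c - t)) (√(c - y))⁻¹ y := by
  have hpos : √(c - y) ≠ 0 := (Real.sqrt_pos.mpr (sub_pos.mpr hy)).ne'
  refine ((((hasDerivAt_id y).const_sub c).sqrt (sub_pos.mpr hy).ne').const_mul (-2)).congr_deriv
    ?_
  simp only [id]
  field_simp

lemma lintegral_Ioi_inv_sqrt_sub_le (a c : ℝ) :
    ∫⁻ y in Ioi a, ENNReal.ofReal (√(c - y))⁻¹ ≤ ENNReal.ofReal (2 * √(c - a)) := by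
  have hvanish : ∀ y ∈ Ici c, ENNReal.ofReal (√(c - y))⁻¹ = 0 := fun y hy => by
    simp [Real.sqrt_eq_zero'.mpr (sub_nonpos.mpr (mem_Ici.mp hy))]
  have hmono : MonotoneOn (fun t => -2 * √(c - t)) (Ioo a c) := fun s _ t _ hst => by
    have := Real.sqrt_le_sqrt (sub_le_sub_left hst c)
    linarith
  have himage : (fun t => -2 * √(c - t)) '' Ioo a c ⊆ Ioo (-(2 * √(c - a))) 0 := by
    rintro _ ⟨t, ⟨hat, htc⟩, rfl⟩
    have h1 : √(c - t) < √(c - a) := Real.sqrt_lt_sqrt (by linarith) (by linarith)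
    have h2 : 0 < √(c - t) := Real.sqrt_pos.mpr (by linarith)
    constructor <;> linarith
  calc ∫⁻ y in Ioi a, ENNReal.ofReal (√(c - y))⁻¹
      ≤ ∫⁻ y in Ioo a c ∪ Ici c, ENNReal.ofReal (√(c - y))⁻¹ :=
        lintegral_mono_set fun y (hy : a < y) => (lt_or_ge y c).imp (⟨hy, ·⟩) id
    _ ≤ (∫⁻ y in Ioo a c, ENNReal.ofReal (√(c - y))⁻¹) +
          ∫⁻ y in Ici c, ENNReal.ofReal (√(c - y))⁻¹ := lintegral_union_le _ _ _
    _ = volume ((fun t => -2 * √(c - t)) '' Ioo a c) := by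
        rw [setLIntegral_eq_zero measurableSet_Ici hvanish, add_zero]
        exact lintegral_deriv_eq_volume_image_of_monotoneOn measurableSet_Ioo
          (fun y hy => (hasDerivAt_neg_two_mul_sqrt_sub hy.2).hasDerivWithinAt) hmono
    _ ≤ ENNReal.ofReal (2 * √(c - a)) := by
        simpa [Real.volume_Ioo] using measure_mono (μ := volume) himage

lemma Teps2_subset_Ioo_prod_Ioi (ε : ℝ) : Teps2 ε ⊆ Ioo (4 - 2 * ε) 4 ×ˢ Ioi (6 - 4 * ε) := by
  rintro ⟨x, y⟩ ⟨⟨⟨habs, -⟩, -⟩, hx1, hx2⟩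
  dsimp only at habs hx1 hx2
  exact ⟨⟨hx1, hx2⟩, show 6 - 4 * ε < y by linarith [le_abs_self (2 * x)]⟩

lemma Phi_le_of_mem_Teps2 {ε : ℝ} (hε : ε ≤ 2) {p : ℝ × ℝ} (hp : p ∈ Teps2 ε) :
    Phi p ≤ 2 * ε * (√(p.1 ^ 2 / 4 - p.2 + 2))⁻¹ := by
  obtain ⟨x, y⟩ := p
  obtain ⟨⟨⟨habs, hpar⟩, -⟩, hx1, hx2⟩ := hp
  obtain ⟨habs1, habs2⟩ := abs_lt.mp habs
  have hu : 0 < x ^ 2 / 4 - y + 2 := by linarith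
  have hA : y - 2 * x + 2 ≤ ε ^ 2 := by nlinarith
  have hB : y + 2 * x + 2 ≤ 16 := by nlinarith
  have hAB : (y - 2 * x + 2) * (y + 2 * x + 2) ≤ 16 * ε ^ 2 :=
    mul_le_mul hA hB (by linarith) (by positivity) |>.trans_eq (mul_comm _ _)
  have hk : 1 / (2 * π ^ 2) ≤ 1 := by
    rw [div_le_one (by positivity)]
    nlinarith [pi_gt_three]
  calc Phi (x, y)
      ≤ √((y - 2 * x + 2) * (y + 2 * x + 2) / (x ^ 2 - 4 * y + 8)) :=
        mul_le_of_le_one_left (Real.sqrt_nonneg _) hk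
    _ ≤ √((2 * ε) ^ 2 / (x ^ 2 / 4 - y + 2)) := by
        apply Real.sqrt_le_sqrt
        rw [show x ^ 2 - 4 * y + 8 = 4 * (x ^ 2 / 4 - y + 2) by ring,
          div_le_div_iff₀ (by positivity) hu]
        nlinarith
    _ = 2 * ε * (√(x ^ 2 / 4 - y + 2))⁻¹ := by
        rw [Real.sqrt_div' _ hu.le, Real.sqrt_sq (by linarith), div_eq_mul_inv]

lemma lintegral_Ioi_mul_inv_sqrt_le {ε x : ℝ} (hε : ε ≤ 1) (hx : x ∈ Ioo (4 - 2 * ε) 4) :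
    ∫⁻ y in Ioi (6 - 4 * ε), ENNReal.ofReal (2 * ε * (√(x ^ 2 / 4 - y + 2))⁻¹) ≤
      ENNReal.ofReal (8 * ε) := by
  obtain ⟨hx1, hx2⟩ := hx
  have hε0 : 0 ≤ 2 * ε := by linarith
  have hsqrt : √(x ^ 2 / 4 + 2 - (6 - 4 * ε)) ≤ 2 :=
    Real.sqrt_le_iff.mpr ⟨zero_le_two, by nlinarith⟩
  calc ∫⁻ y in Ioi (6 - 4 * ε), ENNReal.ofReal (2 * ε * (√(x ^ 2 / 4 - y + 2))⁻¹)
      = ENNReal.ofReal (2 * ε) *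
          ∫⁻ y in Ioi (6 - 4 * ε), ENNReal.ofReal (√(x ^ 2 / 4 + 2 - y))⁻¹ := by
        rw [← lintegral_const_mul' _ _ ENNReal.ofReal_ne_top]
        refine lintegral_congr fun y => ?_
        rw [← ENNReal.ofReal_mul hε0, sub_add_eq_add_sub]
    _ ≤ ENNReal.ofReal (2 * ε) * ENNReal.ofReal (2 * √(x ^ 2 / 4 + 2 - (6 - 4 * ε))) := by
        gcongr
        exact lintegral_Ioi_inv_sqrt_sub_le _ _
    _ ≤ ENNReal.ofReal (2 * ε) * ENNReal.ofReal (2 * 2) := by gcongr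
    _ = ENNReal.ofReal (8 * ε) := by
        rw [← ENNReal.ofReal_mul hε0]
        ring_nf

lemma lintegral_Teps2_Phi_le {ε : ℝ} (hε₀ : 0 ≤ ε) (hε : ε ≤ 1) :
    ∫⁻ p in Teps2 ε, ENNReal.ofReal (Phi p) ≤ ENNReal.ofReal (16 * ε ^ 2) := by
  calc ∫⁻ p in Teps2 ε, ENNReal.ofReal (Phi p)
      ≤ ∫⁻ p in Teps2 ε, ENNReal.ofReal (2 * ε * (√(p.1 ^ 2 / 4 - p.2 + 2))⁻¹) :=
        setLIntegral_mono (by fun_prop) fun p hp =>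
          ENNReal.ofReal_le_ofReal (Phi_le_of_mem_Teps2 (by linarith) hp)
    _ ≤ ∫⁻ p in Ioo (4 - 2 * ε) 4 ×ˢ Ioi (6 - 4 * ε),
          ENNReal.ofReal (2 * ε * (√(p.1 ^ 2 / 4 - p.2 + 2))⁻¹) :=
        lintegral_mono_set (Teps2_subset_Ioo_prod_Ioi ε)
    _ ≤ ∫⁻ x in Ioo (4 - 2 * ε) 4, ∫⁻ y in Ioi (6 - 4 * ε),
          ENNReal.ofReal (2 * ε * (√(x ^ 2 / 4 - y + 2))⁻¹) := by
        rw [Measure.volume_eq_prod, ← Measure.prod_restrict]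
        exact lintegral_prod_le _
    _ ≤ ∫⁻ _ in Ioo (4 - 2 * ε) 4, ENNReal.ofReal (8 * ε) :=
        setLIntegral_mono measurable_const fun x hx => lintegral_Ioi_mul_inv_sqrt_le hε hx
    _ = ENNReal.ofReal (16 * ε ^ 2) := by
        rw [setLIntegral_const, Real.volume_Ioo, ← ENNReal.ofReal_mul (by positivity)]
        ring_nf

/-- `2·∫_{T²_ε} Φ = O(ε²)` as `ε → 0⁺`. -/
theorem stmt_9 :
    ∃ C > (0 : ℝ), ∃ ε₀ > (0 : ℝ), ∀ ε : ℝ, 0 < ε → ε < ε₀ →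
      2 * (∫ p in Teps2 ε, Phi p) ≤ C * ε ^ 2 := by
  refine ⟨32, by norm_num, 1, one_pos, fun ε hε₀ hε => ?_⟩
  have hPhi_nonneg : ∀ p, 0 ≤ Phi p := fun p => by unfold Phi; positivity
  have hPhi_meas : Measurable Phi := by unfold Phi; fun_prop
  have : ∫ p in Teps2 ε, Phi p ≤ 16 * ε ^ 2 := by
    rw [integral_eq_lintegral_of_nonneg_ae (ae_of_all _ hPhi_nonneg)
      hPhi_meas.aestronglyMeasurable]
    exact ENNReal.toReal_le_of_le_ofReal (by positivity) (lintegral_Teps2_Phi_le hε₀.le hε.le)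
  linarith
end

section
/- Let ℓ be an odd prime, k a positive integer, and f a monic quadratic polynomial in (ℤ/ℓᵏℤ)[X] with discriminant D (so if f = X² + bX + c then D = b² − 4c). Then the number of roots of f in ℤ/ℓᵏℤ equals: ℓ^{⌊k/2⌋} if D = 0; 2ℓ^i if D = u²ℓ^{2i} for some unit u ∈ (ℤ/ℓᵏℤ)^× and some integer i with 0 ≤ 2i < k; and 0 in all other cases. -/
/-!
Completing the square (`2` is a unit) turns the roots of `X² + bX + c` into the square roots of
`D`. In `ZMod (p ^ k)` every nonzero element is `v * p ^ j` with `v` a unit and `j < k`, and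
`p ^ t ∣ v * p ^ j` iff `t ≤ j`. Hence `y² = 0` iff `p ^ ⌈k/2⌉ ∣ y`. If `D = a²` with
`a = u * p ^ i`, `2i < k`, then `(y - a)(y + a) = 0`; as `p ^ (i + 1) ∤ 2a`, one factor has
valuation at most `i`, so `p ^ (k - i)` divides the other: the roots form the two disjoint
cosets `±a + p ^ (k - i) ZMod (p ^ k)`, each of size `p ^ i`. Finally, a root `y = v * p ^ j`
of a nonzero `D` exhibits `D` as `v² p ^ (2j)` with `2j < k`.
-/

theorem card_quadratic_roots_eq_card_sq_eq {R : Type*} [CommRing R] (h2 : IsUnit (2 : R))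
    (b c : R) :
    Nat.card {r : R | r ^ 2 + b * r + c = 0} = Nat.card {y : R | y ^ 2 = b ^ 2 - 4 * c} := by
  refine Nat.card_congr (Equiv.subtypeEquiv ((Units.mulLeft h2.unit).trans (Equiv.addRight b))
    fun r => ?_)
  have h4 : IsUnit (4 : R) := by simpa [show (4 : R) = 2 ^ 2 by norm_num] using h2.pow 2
  have hsq : (2 * r + b) ^ 2 - (b ^ 2 - 4 * c) = 4 * (r ^ 2 + b * r + c) := by ring
  simp only [Set.mem_ofPred_eq, Equiv.trans_apply, Units.mulLeft_apply, IsUnit.unit_spec,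
    Equiv.coe_addRight]
  rw [← sub_eq_zero (a := (2 * r + b) ^ 2), hsq, h4.mul_right_eq_zero]

section PrimePowerModulus

variable {p k : ℕ} [hp : Fact p.Prime]

theorem isUnit_two_zmod_pow (hodd : p ≠ 2) : IsUnit (2 : ZMod (p ^ k)) := by
  exact_mod_cast (ZMod.isUnit_iff_coprime 2 (p ^ k)).mpr
    (Nat.coprime_two_left.mpr (hp.out.odd_of_ne_two hodd).pow)

theorem natCast_pow_eq_zero_iff {t : ℕ} : (p : ZMod (p ^ k)) ^ t = 0 ↔ k ≤ t := by
  rw [← Nat.cast_pow, ZMod.natCast_eq_zero_iff, Nat.pow_dvd_pow_iff_le_right hp.out.one_lt]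

theorem isNilpotent_natCast_zmod_pow : IsNilpotent (p : ZMod (p ^ k)) :=
  ⟨k, natCast_pow_eq_zero_iff.mpr le_rfl⟩

theorem natCast_pow_dvd_pow_iff {t j : ℕ} (hj : j < k) :
    (p : ZMod (p ^ k)) ^ t ∣ (p : ZMod (p ^ k)) ^ j ↔ t ≤ j := by
  refine ⟨fun ⟨z, hz⟩ => ?_, pow_dvd_pow _⟩
  by_contra! hjt
  -- `p ^ j * (1 - p ^ (t - j) * z) = 0`, and the second factor is a unit as `p` is nilpotent
  have hunit : IsUnit (1 - (p : ZMod (p ^ k)) ^ (t - j) * z) :=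
    ((Commute.all _ _).isNilpotent_mul_right
      (isNilpotent_natCast_zmod_pow.pow_of_pos (by omega))).isUnit_one_sub
  have hzero : (p : ZMod (p ^ k)) ^ j * (1 - (p : ZMod (p ^ k)) ^ (t - j) * z) = 0 := by
    rw [mul_sub, mul_one, ← mul_assoc, ← pow_add, Nat.add_sub_cancel' hjt.le, ← hz, sub_self]
  exact absurd (natCast_pow_eq_zero_iff.mp (hunit.mul_left_eq_zero.mp hzero)) (by omega)

theorem natCast_pow_dvd_unit_mul_pow_iff {t j : ℕ} (hj : j < k) (v : (ZMod (p ^ k))ˣ) :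
    (p : ZMod (p ^ k)) ^ t ∣ v * (p : ZMod (p ^ k)) ^ j ↔ t ≤ j := by
  rw [Units.dvd_mul_left, natCast_pow_dvd_pow_iff hj]

theorem exists_eq_unit_mul_natCast_pow {x : ZMod (p ^ k)} (hx : x ≠ 0) :
    ∃ (v : (ZMod (p ^ k))ˣ) (j : ℕ), j < k ∧ x = v * (p : ZMod (p ^ k)) ^ j := by
  have hval : x.val ≠ 0 := by rwa [ne_eq, ZMod.val_eq_zero]
  obtain ⟨j, m, hpm, hxm⟩ := Nat.exists_eq_pow_mul_and_not_dvd hval p hp.out.ne_one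
  have hm : m.Coprime (p ^ k) :=
    Nat.Coprime.pow_right k ((Nat.coprime_comm).mp (hp.out.coprime_iff_not_dvd.mpr hpm))
  have hx' : x = ZMod.unitOfCoprime m hm * (p : ZMod (p ^ k)) ^ j := by
    rw [ZMod.coe_unitOfCoprime, ← ZMod.natCast_zmod_val x, hxm]
    push_cast
    ring
  refine ⟨ZMod.unitOfCoprime m hm, j, ?_, hx'⟩
  by_contra! hkj
  exact hx (by rw [hx', natCast_pow_eq_zero_iff.mpr hkj, mul_zero])

theorem natCast_pow_mul_eq_zero_iff {e : ℕ} {z : ZMod (p ^ k)} :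
    (p : ZMod (p ^ k)) ^ e * z = 0 ↔ (p : ZMod (p ^ k)) ^ (k - e) ∣ z := by
  rcases eq_or_ne z 0 with rfl | hz
  · simp
  obtain ⟨w, f, hf, rfl⟩ := exists_eq_unit_mul_natCast_pow hz
  rw [natCast_pow_dvd_unit_mul_pow_iff hf, mul_left_comm, w.mul_right_eq_zero, ← pow_add,
    natCast_pow_eq_zero_iff]
  omega

theorem natCast_pow_dvd_of_mul_eq_zero {i : ℕ} {x z : ZMod (p ^ k)}
    (hx : ¬ (p : ZMod (p ^ k)) ^ (i + 1) ∣ x) (hxz : x * z = 0) :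
    (p : ZMod (p ^ k)) ^ (k - i) ∣ z := by
  have hx0 : x ≠ 0 := by rintro rfl; exact hx (dvd_zero _)
  obtain ⟨v, e, he, rfl⟩ := exists_eq_unit_mul_natCast_pow hx0
  rw [natCast_pow_dvd_unit_mul_pow_iff he, not_le] at hx
  rw [mul_assoc, v.mul_right_eq_zero, natCast_pow_mul_eq_zero_iff] at hxz
  exact (pow_dvd_pow _ (by omega)).trans hxz

theorem card_natCast_pow_dvd {t : ℕ} (ht : t ≤ k) :
    Nat.card {x : ZMod (p ^ k) | (p : ZMod (p ^ k)) ^ t ∣ x} = p ^ (k - t) := by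
  have hmul : {x : ZMod (p ^ k) | (p : ZMod (p ^ k)) ^ t ∣ x}
      = AddSubgroup.zmultiples ((p : ZMod (p ^ k)) ^ t) := by
    ext x
    simp only [Set.mem_ofPred_eq, SetLike.mem_coe, AddSubgroup.mem_zmultiples_iff, zsmul_eq_mul]
    constructor
    · rintro ⟨y, rfl⟩
      obtain ⟨n, rfl⟩ := ZMod.intCast_surjective y
      exact ⟨n, mul_comm _ _⟩
    · rintro ⟨n, rfl⟩
      exact dvd_mul_left _ _
  rw [hmul, SetLike.coe_sort_coe, Nat.card_zmultiples, ← Nat.cast_pow,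
    ZMod.addOrderOf_coe _ (pow_ne_zero _ hp.out.ne_zero), Nat.gcd_eq_right (pow_dvd_pow p ht),
    Nat.pow_div ht hp.out.pos]

theorem card_natCast_pow_dvd_sub {t : ℕ} (ht : t ≤ k) (a : ZMod (p ^ k)) :
    Nat.card {x : ZMod (p ^ k) | (p : ZMod (p ^ k)) ^ t ∣ x - a} = p ^ (k - t) := by
  rw [← card_natCast_pow_dvd ht]
  exact Nat.card_congr (Equiv.subtypeEquiv (Equiv.subRight a) fun _ => Iff.rfl)

theorem sq_eq_zero_iff_natCast_pow_dvd {y : ZMod (p ^ k)} :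
    y ^ 2 = 0 ↔ (p : ZMod (p ^ k)) ^ (k - k / 2) ∣ y := by
  rcases eq_or_ne y 0 with rfl | hy
  · simp
  obtain ⟨v, j, hj, rfl⟩ := exists_eq_unit_mul_natCast_pow hy
  rw [natCast_pow_dvd_unit_mul_pow_iff hj, mul_pow, ← Units.val_pow_eq_pow_val,
    Units.mul_right_eq_zero, ← pow_mul, natCast_pow_eq_zero_iff]
  omega

theorem card_sq_eq_zero : Nat.card {y : ZMod (p ^ k) | y ^ 2 = 0} = p ^ (k / 2) := by
  simp_rw [sq_eq_zero_iff_natCast_pow_dvd]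
  rw [card_natCast_pow_dvd (Nat.sub_le _ _)]
  congr 1
  omega

theorem sq_eq_sq_of_natCast_pow_dvd_sub {i : ℕ} (hi : i ≤ k - i) {a y : ZMod (p ^ k)}
    (ha : (p : ZMod (p ^ k)) ^ i ∣ a) (hy : (p : ZMod (p ^ k)) ^ (k - i) ∣ y - a) :
    y ^ 2 = a ^ 2 := by
  have hy' : (p : ZMod (p ^ k)) ^ i ∣ y + a := by
    rw [show y + a = (y - a) + 2 * a by ring]
    exact dvd_add ((pow_dvd_pow _ hi).trans hy) (dvd_mul_of_dvd_right ha _)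
  have hk : (p : ZMod (p ^ k)) ^ k ∣ (y - a) * (y + a) := by
    have h := mul_dvd_mul hy hy'
    rwa [← pow_add, Nat.sub_add_cancel (by omega)] at h
  rw [natCast_pow_eq_zero_iff.mpr le_rfl, zero_dvd_iff] at hk
  linear_combination hk

theorem sq_eq_unit_mul_pow_sq_iff (h2 : IsUnit (2 : ZMod (p ^ k))) (u : (ZMod (p ^ k))ˣ)
    {i : ℕ} (hi : 2 * i < k) {y : ZMod (p ^ k)} :
    y ^ 2 = (u * (p : ZMod (p ^ k)) ^ i) ^ 2 ↔
      (p : ZMod (p ^ k)) ^ (k - i) ∣ y - u * (p : ZMod (p ^ k)) ^ i ∨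
      (p : ZMod (p ^ k)) ^ (k - i) ∣ y + u * (p : ZMod (p ^ k)) ^ i := by
  set a := (u : ZMod (p ^ k)) * (p : ZMod (p ^ k)) ^ i
  have h2a : 2 * a = ↑(h2.unit * u) * (p : ZMod (p ^ k)) ^ i := by
    rw [Units.val_mul, IsUnit.unit_spec, mul_assoc]
  have hdiff : (y + a) - (y - a) = 2 * a := by ring
  have hpa : (p : ZMod (p ^ k)) ^ i ∣ a := dvd_mul_left _ _
  constructor
  · intro hy
    have hprod : (y - a) * (y + a) = 0 := by linear_combination hy
    by_cases hsub : (p : ZMod (p ^ k)) ^ (i + 1) ∣ y - a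
    · -- `p ^ (i + 1)` cannot divide both `y - a` and `y + a`, as it does not divide `2 a`
      have hadd : ¬ (p : ZMod (p ^ k)) ^ (i + 1) ∣ y + a := fun hadd => by
        have h := dvd_sub hadd hsub
        rw [hdiff, h2a, natCast_pow_dvd_unit_mul_pow_iff (by omega)] at h
        omega
      exact Or.inl (natCast_pow_dvd_of_mul_eq_zero hadd (by rw [mul_comm, hprod]))
    · exact Or.inr (natCast_pow_dvd_of_mul_eq_zero hsub hprod)
  · rintro (hy | hy)
    · exact sq_eq_sq_of_natCast_pow_dvd_sub (by omega) hpa hy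
    · rw [← neg_sq a]
      exact sq_eq_sq_of_natCast_pow_dvd_sub (by omega) (dvd_neg.mpr hpa) (by rwa [sub_neg_eq_add])

theorem card_sq_eq_unit_mul_pow_sq (h2 : IsUnit (2 : ZMod (p ^ k))) (u : (ZMod (p ^ k))ˣ)
    {i : ℕ} (hi : 2 * i < k) :
    Nat.card {y : ZMod (p ^ k) | y ^ 2 = (u * (p : ZMod (p ^ k)) ^ i) ^ 2} = 2 * p ^ i := by
  set a := (u : ZMod (p ^ k)) * (p : ZMod (p ^ k)) ^ i
  have hdisj : Disjoint {y : ZMod (p ^ k) | (p : ZMod (p ^ k)) ^ (k - i) ∣ y - a}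
      {y | (p : ZMod (p ^ k)) ^ (k - i) ∣ y - -a} := by
    refine Set.disjoint_left.mpr fun y hsub hadd => ?_
    have h := dvd_sub hadd hsub
    rw [show y - -a - (y - a) = ↑(h2.unit * u) * (p : ZMod (p ^ k)) ^ i by
      rw [Units.val_mul, IsUnit.unit_spec]; ring, natCast_pow_dvd_unit_mul_pow_iff (by omega)] at h
    omega
  have hset : {y : ZMod (p ^ k) | y ^ 2 = a ^ 2}
      = {y | (p : ZMod (p ^ k)) ^ (k - i) ∣ y - a} ∪
        {y | (p : ZMod (p ^ k)) ^ (k - i) ∣ y - -a} := by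
    ext y
    simp only [Set.mem_union, Set.mem_ofPred_eq, sub_neg_eq_add]
    exact sq_eq_unit_mul_pow_sq_iff h2 u hi
  rw [hset, Nat.card_coe_set_eq, Set.ncard_union_eq hdisj, ← Nat.card_coe_set_eq,
    ← Nat.card_coe_set_eq, card_natCast_pow_dvd_sub (Nat.sub_le _ _),
    card_natCast_pow_dvd_sub (Nat.sub_le _ _), Nat.sub_sub_self (by omega), two_mul]

theorem exists_eq_unit_sq_mul_pow_of_sq_eq {y D : ZMod (p ^ k)}
    (hD : D ≠ 0) (hy : y ^ 2 = D) :
    ∃ (u : (ZMod (p ^ k))ˣ) (i : ℕ), 2 * i < k ∧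
      D = (u : ZMod (p ^ k)) ^ 2 * (p : ZMod (p ^ k)) ^ (2 * i) := by
  have hy0 : y ≠ 0 := by rintro rfl; exact hD (by rw [← hy, zero_pow two_ne_zero])
  obtain ⟨v, j, -, rfl⟩ := exists_eq_unit_mul_natCast_pow hy0
  have hD' : D = (v : ZMod (p ^ k)) ^ 2 * (p : ZMod (p ^ k)) ^ (2 * j) := by
    rw [← hy, mul_pow, ← pow_mul']
  refine ⟨v, j, ?_, hD'⟩
  by_contra! hkj
  exact hD (by rw [hD', natCast_pow_eq_zero_iff.mpr hkj, mul_zero])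

end PrimePowerModulus

theorem stmt_10_general (ℓ k : ℕ) (hℓ : ℓ.Prime) (hodd : ℓ ≠ 2)
    (b c : ZMod (ℓ ^ k)) :
    (b ^ 2 - 4 * c = 0 →
      Nat.card {r : ZMod (ℓ ^ k) | r ^ 2 + b * r + c = 0} = ℓ ^ (k / 2)) ∧
    (∀ (u : (ZMod (ℓ ^ k))ˣ) (i : ℕ), 2 * i < k →
      b ^ 2 - 4 * c = (u : ZMod (ℓ ^ k)) ^ 2 * (ℓ : ZMod (ℓ ^ k)) ^ (2 * i) →
      Nat.card {r : ZMod (ℓ ^ k) | r ^ 2 + b * r + c = 0} = 2 * ℓ ^ i) ∧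
    (b ^ 2 - 4 * c ≠ 0 →
      (¬ ∃ (u : (ZMod (ℓ ^ k))ˣ) (i : ℕ), 2 * i < k ∧
        b ^ 2 - 4 * c = (u : ZMod (ℓ ^ k)) ^ 2 * (ℓ : ZMod (ℓ ^ k)) ^ (2 * i)) →
      Nat.card {r : ZMod (ℓ ^ k) | r ^ 2 + b * r + c = 0} = 0) := by
  have := Fact.mk hℓ
  have h2 : IsUnit (2 : ZMod (ℓ ^ k)) := isUnit_two_zmod_pow hodd
  rw [card_quadratic_roots_eq_card_sq_eq h2]
  refine ⟨fun hD => ?_, fun u i hi hD => ?_, fun hD hD' => ?_⟩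
  · rw [hD, card_sq_eq_zero]
  · rw [hD, pow_mul', ← mul_pow, card_sq_eq_unit_mul_pow_sq h2 u hi]
  · have : IsEmpty {y : ZMod (ℓ ^ k) | y ^ 2 = b ^ 2 - 4 * c} :=
      ⟨fun ⟨_, hy⟩ => hD' (exists_eq_unit_sq_mul_pow_of_sq_eq hD hy)⟩
    exact Nat.card_of_isEmpty

/-- Number of roots of a monic quadratic polynomial `X² + bX + c` over `ℤ/ℓᵏℤ`
(`ℓ` an odd prime, `k ≥ 1`), in terms of its discriminant `D = b² − 4c`:
`ℓ^⌊k/2⌋` roots if `D = 0`; `2ℓⁱ` roots if `D = u²ℓ^(2i)` with `u` a unit and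
`0 ≤ 2i < k`; and no roots otherwise. -/
theorem stmt_10 (ℓ k : ℕ) (hℓ : ℓ.Prime) (hodd : ℓ ≠ 2) (hk : 1 ≤ k)
    (b c : ZMod (ℓ ^ k)) :
    (b ^ 2 - 4 * c = 0 →
      Nat.card {r : ZMod (ℓ ^ k) | r ^ 2 + b * r + c = 0} = ℓ ^ (k / 2)) ∧
    (∀ (u : (ZMod (ℓ ^ k))ˣ) (i : ℕ), 2 * i < k →
      b ^ 2 - 4 * c = (u : ZMod (ℓ ^ k)) ^ 2 * (ℓ : ZMod (ℓ ^ k)) ^ (2 * i) →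
      Nat.card {r : ZMod (ℓ ^ k) | r ^ 2 + b * r + c = 0} = 2 * ℓ ^ i) ∧
    (b ^ 2 - 4 * c ≠ 0 →
      (¬ ∃ (u : (ZMod (ℓ ^ k))ˣ) (i : ℕ), 2 * i < k ∧
        b ^ 2 - 4 * c = (u : ZMod (ℓ ^ k)) ^ 2 * (ℓ : ZMod (ℓ ^ k)) ^ (2 * i)) →
      Nat.card {r : ZMod (ℓ ^ k) | r ^ 2 + b * r + c = 0} = 0) :=
  stmt_10_general ℓ k hℓ hodd b c
end

section
/- Let ℓ be an odd prime, k ≥ 1, and D an integer that is a quadratic nonresidue modulo ℓ. Let R_k = (ℤ/ℓᵏℤ)[X]/(X² − D) with α the image of X, and for b ∈ R_k let v(b) = max{t ∈ {0,…,k} | b ∈ ℓᵗ R_k}. Fix 1 ≤ r ≤ k, elements a, d ∈ R_k, and b ∈ R_k with v(b) = r. Then there exists c ∈ R_k such that the matrix [[a,b],[c,d]] lies in 𝒜ᵗ_{ℓᵏ,I} (i.e., its determinant lies in the image of (ℤ/ℓᵏℤ)^× and its trace lies in the image of ℤ/ℓᵏℤ) if and only if a·d ∈ im((ℤ/ℓᵏℤ)^×)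 + α·ℓʳ·im(ℤ/ℓᵏℤ) and a + d ∈ im(ℤ/ℓᵏℤ); moreover, when these two conditions hold, the number of such c is exactly ℓ^{k+r}. -/
open Matrix Polynomial
open scoped Classical

/-- `α`, the image of `X` in `R_k`. -/
noncomputable def alphaI (ℓ k : ℕ) (D : ℤ) : InertRing ℓ k D :=
  AdjoinRoot.root ((X : Polynomial (ZMod (ℓ ^ k))) ^ 2 - C (D : ZMod (ℓ ^ k)))

/-- Truncated `ℓ`-adic valuation on `R_k`: the largest `t ∈ {0,…,k}` with
`b ∈ ℓᵗ R_k` (so `v 0 = k`). -/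
noncomputable def vR (ℓ k : ℕ) (D : ℤ) (b : InertRing ℓ k D) : ℕ :=
  Nat.findGreatest (fun t => ∃ y : InertRing ℓ k D, b = (ℓ : InertRing ℓ k D) ^ t * y) k

/-- Membership of a matrix in `𝒜ᵗ_{ℓᵏ,I}`: its determinant lies in the image of
`(ℤ/ℓᵏℤ)ˣ` and its trace lies in the image of `ℤ/ℓᵏℤ`. -/
def memAt (ℓ k : ℕ) (D : ℤ) (M : Matrix (Fin 2) (Fin 2) (InertRing ℓ k D)) : Prop :=
  (∃ u : (ZMod (ℓ ^ k))ˣ,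
    M.det = algebraMap (ZMod (ℓ ^ k)) (InertRing ℓ k D) (u : ZMod (ℓ ^ k))) ∧
  ∃ z : ZMod (ℓ ^ k), M.trace = algebraMap (ZMod (ℓ ^ k)) (InertRing ℓ k D) z

/-- The two conditions on the pair `(a,d)`:
`a·d ∈ im((ℤ/ℓᵏℤ)ˣ) + α·ℓʳ·im(ℤ/ℓᵏℤ)` and `a + d ∈ im(ℤ/ℓᵏℤ)`. -/
def pairCond (ℓ k : ℕ) (D : ℤ) (r : ℕ) (a d : InertRing ℓ k D) : Prop :=
  (∃ (u : (ZMod (ℓ ^ k))ˣ) (z : ZMod (ℓ ^ k)),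
    a * d = algebraMap (ZMod (ℓ ^ k)) (InertRing ℓ k D) (u : ZMod (ℓ ^ k)) +
      alphaI ℓ k D * (ℓ : InertRing ℓ k D) ^ r *
        algebraMap (ZMod (ℓ ^ k)) (InertRing ℓ k D) z) ∧
  ∃ z : ZMod (ℓ ^ k), a + d = algebraMap (ZMod (ℓ ^ k)) (InertRing ℓ k D) z

/-!
Write every element of `R_k` as `x + yα` with `x, y ∈ ℤ/ℓᵏ`. Since `b ∈ ℓʳR_k` with `r ≥ 1`,
the `1`-coordinate of `bc` is nilpotent, so `ad - bc` lies in `im((ℤ/ℓᵏ)ˣ)` exactly when the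
`1`-coordinate of `ad` is a unit and `c` solves the linear equation `im(bc) = im(ad)`. Because
`v(b) = r`, we have `b = ℓʳy` with `y ∉ ℓR_k` (or `r = k`), so one coordinate of `y` is a unit and
`c ↦ im(bc)` has image exactly `ℓʳ(ℤ/ℓᵏ)`, a group of order `ℓ^(k-r)`. Hence the equation is
solvable iff `im(ad) ∈ ℓʳ(ℤ/ℓᵏ)`, and then its solutions form a coset of a kernel of order
`ℓ^(2k) / ℓ^(k-r) = ℓ^(k+r)`.
-/

lemma IsNilpotent.isUnit_sub_iff {R : Type*} [CommRing R] {n : R} (hn : IsNilpotent n) (a : R) :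
    IsUnit (a - n) ↔ IsUnit a := by
  refine ⟨fun h => ?_, fun h => ?_⟩
  · simpa using hn.isUnit_add_left_of_commute h (Commute.all _ _)
  · simpa [sub_eq_add_neg] using hn.neg.isUnit_add_left_of_commute h (Commute.all _ _)

lemma AddMonoidHom.natCard_fiber_eq_natCard_ker {G H : Type*} [AddGroup G] [AddGroup H]
    (f : G →+ H) {t : H} (ht : t ∈ Set.range f) : Nat.card {g | f g = t} = Nat.card f.ker := by
  obtain ⟨g₀, rfl⟩ := ht
  refine Nat.card_congr (Equiv.subtypeEquiv (Equiv.subRight g₀) fun g => ?_)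
  simp [sub_eq_zero]

lemma ZMod.natCard_range_natCast_mul (n : ℕ) {m : ℕ} (hm : m ≠ 0) :
    Nat.card (Set.range ((n : ZMod m) * ·)) = m / m.gcd n := by
  have : Set.range ((n : ZMod m) * ·) = AddSubgroup.zmultiples (n : ZMod m) := by
    ext x
    simp only [Set.mem_range, SetLike.mem_coe, AddSubgroup.mem_zmultiples_iff, zsmul_eq_mul]
    constructor
    · rintro ⟨z, rfl⟩
      exact ⟨z.cast, by rw [ZMod.intCast_zmod_cast, mul_comm]⟩
    · rintro ⟨j, rfl⟩
      exact ⟨j, mul_comm _ _⟩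
  rw [this, SetLike.coe_sort_coe, Nat.card_zmultiples, ZMod.addOrderOf_coe _ hm]

lemma ZMod.natCast_dvd_of_not_isUnit {p : ℕ} (hp : p.Prime) {k : ℕ} {a : ZMod (p ^ k)}
    (ha : ¬IsUnit a) : (p : ZMod (p ^ k)) ∣ a := by
  have : NeZero (p ^ k) := ⟨pow_ne_zero _ hp.ne_zero⟩
  rw [← ZMod.natCast_zmod_val a, ZMod.isUnit_iff_coprime] at ha
  have hdvd : p ∣ a.val := by
    by_contra h
    exact ha ((hp.coprime_iff_not_dvd.mpr h).symm.pow_right k)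
  rw [← ZMod.natCast_zmod_val a]
  exact Nat.cast_dvd_cast hdvd

namespace QuadraticAdjoinRoot

variable {A : Type*} [CommRing A]

lemma root_sq (D : A) : AdjoinRoot.root ((X : A[X]) ^ 2 - C D) ^ 2 = algebraMap A _ D := by
  have h := AdjoinRoot.eval₂_root ((X : A[X]) ^ 2 - C D)
  rw [eval₂_sub, eval₂_X_pow, eval₂_C, sub_eq_zero] at h
  exact h

variable [Nontrivial A] (D : A)

local notation "R" => AdjoinRoot ((X : A[X]) ^ 2 - C D)
local notation "α" => AdjoinRoot.root ((X : A[X]) ^ 2 - C D)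
local notation "ι" => algebraMap A (AdjoinRoot ((X : A[X]) ^ 2 - C D))

noncomputable def basis : Module.Basis (Fin 2) A R :=
  (AdjoinRoot.powerBasis' (monic_X_pow_sub_C D two_ne_zero)).basis.reindex
    (finCongr natDegree_X_pow_sub_C)

lemma basis_apply (i : Fin 2) : basis D i = α ^ (i : ℕ) := by
  simp only [basis, Module.Basis.reindex_apply, PowerBasis.basis_eq_pow,
    AdjoinRoot.powerBasis'_gen]
  rfl

noncomputable def re : R →ₗ[A] A := (basis D).coord 0

noncomputable def im : R →ₗ[A] A := (basis D).coord 1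

variable {D}

lemma algebraMap_add_mul_root_eq_sum_basis (p q : A) :
    ι p + ι q * α = p • basis D 0 + q • basis D 1 := by
  simp [basis_apply, Algebra.smul_def]

@[simp] lemma re_algebraMap_add_mul_root (p q : A) : re D (ι p + ι q * α) = p := by
  rw [algebraMap_add_mul_root_eq_sum_basis]
  simp [re]

@[simp] lemma im_algebraMap_add_mul_root (p q : A) : im D (ι p + ι q * α) = q := by
  rw [algebraMap_add_mul_root_eq_sum_basis]
  simp [im]

@[simp] lemma re_algebraMap (u : A) : re D (ι u) = u := by
  simpa using re_algebraMap_add_mul_root (D := D) u 0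

@[simp] lemma im_algebraMap (u : A) : im D (ι u) = 0 := by
  simpa using im_algebraMap_add_mul_root (D := D) u 0

lemma algebraMap_re_add_im_mul_root (x : R) : ι (re D x) + ι (im D x) * α = x := by
  rw [algebraMap_add_mul_root_eq_sum_basis]
  simpa only [re, im, Module.Basis.coord_apply, Fin.sum_univ_two] using (basis D).sum_repr x

lemma ext_iff {x y : R} : x = y ↔ re D x = re D y ∧ im D x = im D y := by
  refine ⟨fun h => h ▸ ⟨rfl, rfl⟩, fun ⟨h0, h1⟩ => ?_⟩
  rw [← algebraMap_re_add_im_mul_root x, ← algebraMap_re_add_im_mul_root y, h0, h1]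

lemma natCard_eq : Nat.card R = Nat.card A ^ 2 := by
  rw [Nat.card_congr (basis D).equivFun.toEquiv, Nat.card_fun, Nat.card_fin]

lemma im_algebraMap_mul (p : A) (x : R) : im D (ι p * x) = p * im D x := by
  rw [← Algebra.smul_def, map_smul, smul_eq_mul]

lemma im_mul_root (x : R) : im D (x * α) = re D x := by
  have : x * α = ι (im D x * D) + ι (re D x) * α := by
    conv_lhs => rw [← algebraMap_re_add_im_mul_root x]
    rw [map_mul, ← root_sq]
    ring
  rw [this, im_algebraMap_add_mul_root]

lemma eq_algebraMap_iff (x : R) (u : A) : x = ι u ↔ re D x = u ∧ im D x = 0 := by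
  rw [ext_iff, re_algebraMap, im_algebraMap]

lemma exists_units_eq_algebraMap_iff (x : R) :
    (∃ u : Aˣ, x = ι u) ↔ IsUnit (re D x) ∧ im D x = 0 := by
  simp_rw [eq_algebraMap_iff]
  constructor
  · rintro ⟨u, hre, him⟩
    exact ⟨hre ▸ u.isUnit, him⟩
  · rintro ⟨hu, him⟩
    exact ⟨hu.unit, hu.unit_spec.symm, him⟩

lemma exists_units_add_root_mul_iff (x : R) (p : A) :
    (∃ (u : Aˣ) (z : A), x = ι u + α * ι p * ι z) ↔ IsUnit (re D x) ∧ ∃ z, im D x = p * z := by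
  have hform (u z : A) : ι u + α * ι p * ι z = ι u + ι (p * z) * α := by
    rw [map_mul]
    ring
  simp_rw [hform, ext_iff (y := _ + _), re_algebraMap_add_mul_root,
    im_algebraMap_add_mul_root]
  constructor
  · rintro ⟨u, z, hre, him⟩
    exact ⟨hre ▸ u.isUnit, z, him⟩
  · rintro ⟨hu, z, him⟩
    exact ⟨hu.unit, z, hu.unit_spec.symm, him⟩

lemma isUnit_re_sub_iff {p : A} (hp : IsNilpotent p) (x y : R) :
    IsUnit (re D (x - ι p * y)) ↔ IsUnit (re D x) := by
  rw [← Algebra.smul_def, map_sub, map_smul, smul_eq_mul]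
  exact ((Commute.all p _).isNilpotent_mul_right hp).isUnit_sub_iff _

lemma surjective_im_mul {p : A} (hp : ∀ a : A, ¬IsUnit a → p ∣ a) {y : R}
    (hy : ¬∃ y', y = ι p * y') : Function.Surjective fun c => im D (y * c) := by
  by_cases him : IsUnit (im D y)
  · intro t
    refine ⟨ι (↑him.unit⁻¹ * t), ?_⟩
    dsimp only
    rw [mul_comm y, im_algebraMap_mul, mul_right_comm, him.val_inv_mul, one_mul]
  by_cases hre : IsUnit (re D y)
  · intro t
    refine ⟨ι (↑hre.unit⁻¹ * t) * α, ?_⟩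
    dsimp only
    rw [mul_left_comm, im_algebraMap_mul, im_mul_root, mul_right_comm, hre.val_inv_mul, one_mul]
  obtain ⟨q, hq⟩ := hp _ hre
  obtain ⟨s, hs⟩ := hp _ him
  refine absurd ⟨ι q + ι s * α, ?_⟩ hy
  rw [← algebraMap_re_add_im_mul_root y, hq, hs, map_mul, map_mul]
  ring

noncomputable def imMul (b : R) : R →ₗ[A] A := (im D).comp (LinearMap.mulLeft A b)

@[simp] lemma imMul_apply (b c : R) : imMul b c = im D (b * c) :=
  rfl

lemma exists_units_eq_sub_mul_iff {p : A} (hp : IsNilpotent p) {b y : R} (hb : b = ι p * y)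
    (x c : R) : (∃ u : Aˣ, x - b * c = ι u) ↔ IsUnit (re D x) ∧ imMul b c = im D x := by
  rw [exists_units_eq_algebraMap_iff, hb, mul_assoc, isUnit_re_sub_iff hp, map_sub, sub_eq_zero,
    imMul_apply, mul_assoc, eq_comm]

end QuadraticAdjoinRoot

section InertRing

open QuadraticAdjoinRoot

variable {ℓ k : ℕ} {D : ℤ}

lemma exists_eq_pow_mul_of_vR_eq {b : InertRing ℓ k D} {r : ℕ} (hb : vR ℓ k D b = r) :
    ∃ y, b = (ℓ : InertRing ℓ k D) ^ r * y ∧ (r = k ∨ ¬∃ y', y = ℓ * y') := by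
  unfold vR at hb
  obtain ⟨hrk, -, hmax⟩ := Nat.findGreatest_eq_iff.mp hb
  obtain ⟨y, hy⟩ : ∃ y, b = (ℓ : InertRing ℓ k D) ^ r * y := by
    rw [← hb]
    exact Nat.findGreatest_spec (P := fun t => ∃ y, b = (ℓ : InertRing ℓ k D) ^ t * y)
      (Nat.zero_le k) ⟨b, (one_mul b).symm⟩
  refine ⟨y, hy, or_iff_not_imp_left.mpr fun hr ⟨y', hy'⟩ =>
    hmax (Nat.lt_add_one r) (by omega) ⟨y', ?_⟩⟩
  rw [hy, hy']
  ring

lemma natCast_pow_eq_algebraMap (r : ℕ) :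
    (ℓ : InertRing ℓ k D) ^ r = algebraMap _ _ ((ℓ : ZMod (ℓ ^ k)) ^ r) := by
  rw [map_pow, map_natCast]

variable [Fact (1 < ℓ ^ k)]

lemma range_imMul_of_vR_eq (hℓ : ℓ.Prime) {b : InertRing ℓ k D} {r : ℕ}
    (hb : vR ℓ k D b = r) : Set.range (imMul b) = Set.range (((ℓ : ZMod (ℓ ^ k)) ^ r) * ·) := by
  obtain ⟨y, rfl, hy⟩ := exists_eq_pow_mul_of_vR_eq hb
  have himMul (c : InertRing ℓ k D) :
      imMul ((ℓ : InertRing ℓ k D) ^ r * y) c = (ℓ : ZMod (ℓ ^ k)) ^ r * im _ (y * c) := by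
    rw [imMul_apply, natCast_pow_eq_algebraMap, mul_assoc, im_algebraMap_mul]
  refine Set.Subset.antisymm (Set.range_subset_iff.mpr fun c => ⟨_, (himMul c).symm⟩) ?_
  rintro _ ⟨z, rfl⟩
  rcases hy with rfl | hy
  · exact ⟨0, by rw [himMul]; simp [← Nat.cast_pow]⟩
  · have hy' : ¬∃ y', y = algebraMap (ZMod (ℓ ^ k)) (InertRing ℓ k D) ℓ * y' := by
      rwa [map_natCast]
    obtain ⟨c, hc⟩ := surjective_im_mul (fun _ => ZMod.natCast_dvd_of_not_isUnit hℓ) hy' z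
    exact ⟨c, by rw [himMul]; exact congrArg _ hc⟩

lemma natCard_fiber_imMul (hℓ : ℓ.Prime) {r : ℕ} (hrk : r ≤ k) {b : InertRing ℓ k D}
    (hb : vR ℓ k D b = r) {t : ZMod (ℓ ^ k)} (ht : t ∈ Set.range (imMul b)) :
    Nat.card {c | imMul b c = t} = ℓ ^ (k + r) := by
  have hrange : Nat.card (imMul b).toAddMonoidHom.range = ℓ ^ (k - r) := by
    rw [← SetLike.coe_sort_coe, AddMonoidHom.coe_range, LinearMap.toAddMonoidHom_coe,
      range_imMul_of_vR_eq hℓ hb, ← Nat.cast_pow,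
      ZMod.natCard_range_natCast_mul _ (pow_ne_zero _ hℓ.ne_zero),
      Nat.gcd_eq_right (pow_dvd_pow ℓ hrk), Nat.pow_div hrk hℓ.pos]
  have hcard := (imMul b).toAddMonoidHom.ker.card_mul_index
  rw [AddSubgroup.index_ker, hrange, natCard_eq, Nat.card_zmod] at hcard
  change Nat.card {c | (imMul b).toAddMonoidHom c = t} = _
  rw [(imMul b).toAddMonoidHom.natCard_fiber_eq_natCard_ker ht]
  apply Nat.eq_of_mul_eq_mul_right (pow_pos hℓ.pos (k - r))
  rw [hcard, ← pow_mul, ← pow_add]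
  congr 1
  omega

lemma memAt_iff_of_vR_eq {r : ℕ} (hr1 : 1 ≤ r) {a b c d : InertRing ℓ k D}
    (hb : vR ℓ k D b = r) :
    memAt ℓ k D !![a, b; c, d] ↔
      (IsUnit (re _ (a * d)) ∧ imMul b c = im _ (a * d)) ∧
        ∃ z, a + d = algebraMap (ZMod (ℓ ^ k)) _ z := by
  obtain ⟨y, hy, -⟩ := exists_eq_pow_mul_of_vR_eq hb
  have hnil : IsNilpotent ((ℓ : ZMod (ℓ ^ k)) ^ r) :=
    IsNilpotent.pow_of_pos ⟨k, by rw [← Nat.cast_pow, ZMod.natCast_self]⟩ (by omega)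
  rw [natCast_pow_eq_algebraMap] at hy
  rw [memAt, det_fin_two_of, trace_fin_two_of, exists_units_eq_sub_mul_iff hnil hy]

lemma pairCond_iff (r : ℕ) (a d : InertRing ℓ k D) :
    pairCond ℓ k D r a d ↔
      (IsUnit (re _ (a * d)) ∧ im _ (a * d) ∈ Set.range (((ℓ : ZMod (ℓ ^ k)) ^ r) * ·)) ∧
        ∃ z, a + d = algebraMap (ZMod (ℓ ^ k)) _ z := by
  rw [pairCond, alphaI, natCast_pow_eq_algebraMap, exists_units_add_root_mul_iff]
  simp only [Set.mem_range, eq_comm (b := im _ (a * d))]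

end InertRing

theorem stmt_13_general (ℓ k : ℕ) (hℓ : ℓ.Prime) (D : ℤ)
    (r : ℕ) (hr1 : 1 ≤ r) (hrk : r ≤ k)
    (a d b : InertRing ℓ k D) (hb : vR ℓ k D b = r) :
    ((∃ c : InertRing ℓ k D, memAt ℓ k D !![a, b; c, d]) ↔ pairCond ℓ k D r a d) ∧
    (pairCond ℓ k D r a d →
      Nat.card {c : InertRing ℓ k D | memAt ℓ k D !![a, b; c, d]} = ℓ ^ (k + r)) := by
  have : Fact (1 < ℓ ^ k) := ⟨Nat.one_lt_pow (by omega) hℓ.one_lt⟩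
  simp_rw [memAt_iff_of_vR_eq hr1 hb, pairCond_iff, ← range_imMul_of_vR_eq hℓ hb]
  refine ⟨⟨fun ⟨c, ⟨hu, hc⟩, htr⟩ => ⟨⟨hu, c, hc⟩, htr⟩,
    fun ⟨⟨hu, c, hc⟩, htr⟩ => ⟨c, ⟨hu, hc⟩, htr⟩⟩, fun ⟨⟨hu, ht⟩, htr⟩ => ?_⟩
  simp only [hu, htr, true_and, and_true]
  exact natCard_fiber_imMul hℓ hrk hb ht

/-- For `b` of valuation `r` (`1 ≤ r ≤ k`), there exists `c` with
`[[a,b],[c,d]] ∈ 𝒜ᵗ_{ℓᵏ,I}` iff the two conditions on `(a,d)` hold; and in that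
case there are exactly `ℓ^(k+r)` such `c`. -/
theorem stmt_13 (ℓ k : ℕ) (hℓ : ℓ.Prime) (hodd : ℓ ≠ 2) (hk : 1 ≤ k) (D : ℤ)
    (hD : ¬ IsSquare (D : ZMod ℓ)) (r : ℕ) (hr1 : 1 ≤ r) (hrk : r ≤ k)
    (a d b : InertRing ℓ k D) (hb : vR ℓ k D b = r) :
    ((∃ c : InertRing ℓ k D, memAt ℓ k D !![a, b; c, d]) ↔ pairCond ℓ k D r a d) ∧
    (pairCond ℓ k D r a d →
      Nat.card {c : InertRing ℓ k D | memAt ℓ k D !![a, b; c, d]} = ℓ ^ (k + r)) :=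
  stmt_13_general ℓ k hℓ D r hr1 hrk a d b hb
end

section
/- Let ℓ be an odd prime, k ≥ 1, and D an integer that is a quadratic nonresidue modulo ℓ. Let R_k = (ℤ/ℓᵏℤ)[X]/(X² − D) with α the image of X. For each r with 1 ≤ r ≤ k, the number of pairs (a,d) ∈ R_k² satisfying both a·d ∈ im((ℤ/ℓᵏℤ)^×) + α·ℓʳ·im(ℤ/ℓᵏℤ) and a + d ∈ im(ℤ/ℓᵏℤ) equals ℓ^{3k−r−2}(ℓ−1)(rℓ − r + ℓ). -/
/-!
Write `a = a₀ + a₁ α` and `d = d₀ + d₁ α`. The trace condition forces `d₁ = -a₁`, and then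
`a d = (a₀ d₀ - D a₁²) + a₁ (d₀ - a₀) α`, so one counts triples `(a₁, a₀, d₀)` over `ℤ/ℓᵏ` with
`a₀ d₀ - D a₁²` a unit and `ℓʳ ∣ a₁ (d₀ - a₀)`. Stratify by `j = min(r, v_ℓ(a₁))`: the
divisibility becomes `ℓ^(r-j) ∣ d₀ - a₀`. For `j = 0` the norm is then automatically a unit, as
`D` is a nonresidue mod `ℓ`, giving `ℓ^(3k-r-1)(ℓ-1)` triples; for `j ≥ 1` the norm is a unit iff
`a₀` and `d₀` are, and each of these `r` strata contributes `ℓ^(3k-r-2)(ℓ-1)²` triples.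
-/

open Matrix Polynomial

open Finset

lemma card_filter_and_prod {α β : Type*} [Fintype α] [Fintype β] (P : α → Prop) (Q : β → Prop)
    [DecidablePred P] [DecidablePred Q] :
    #{t : α × β | P t.1 ∧ Q t.2} = #{a | P a} * #{b | Q b} := by
  rw [← card_product, ← filter_product, univ_product_univ]

lemma card_filter_fst_and_sub_fst {G : Type*} [AddGroup G] [Fintype G] (P Q : G → Prop)
    [DecidablePred P] [DecidablePred Q] :
    #{p : G × G | P p.1 ∧ Q (p.2 - p.1)} = #{x | P x} * #{x | Q x} := by
  rw [← card_product, ← filter_product, univ_product_univ]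
  exact card_equiv ((Equiv.refl G).prodShear fun a => Equiv.subRight a) (by simp)

lemma mul_self_sub_mul_sq_ne_zero {F : Type*} [Field F] {D : F} (hD : ¬ IsSquare D) (a : F)
    {c : F} (hc : c ≠ 0) : a * a - D * c ^ 2 ≠ 0 := by
  intro h
  exact hD ⟨a / c, by field_simp; linear_combination -h⟩

section AdjoinSqrt

variable {R : Type*} [CommRing R] [Nontrivial R] (c : R)

noncomputable def adjoinSqrtEquiv : (R × R) ≃ₗ[R] AdjoinRoot (X ^ 2 - C c) :=
  (LinearEquiv.finTwoArrow R R).symm ≪≫ₗ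
    ((AdjoinRoot.powerBasis' (monic_X_pow_sub_C c two_ne_zero)).basis.reindex
      (finCongr natDegree_X_pow_sub_C)).equivFun.symm

lemma adjoinSqrtEquiv_apply (p : R × R) :
    adjoinSqrtEquiv c p = algebraMap R _ p.1 + algebraMap R _ p.2 * AdjoinRoot.root _ := by
  simp only [adjoinSqrtEquiv, LinearEquiv.trans_apply, Module.Basis.equivFun_symm_apply,
    Fin.sum_univ_two, Module.Basis.reindex_apply, PowerBasis.coe_basis,
    AdjoinRoot.powerBasis'_gen]
  -- the exponents are `Fin.cast`s of `0` and `1`, which `simp` does not see through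
  show (_ : R) • AdjoinRoot.root (X ^ 2 - C c) ^ 0 + (_ : R) • AdjoinRoot.root (X ^ 2 - C c) ^ 1 = _
  simp [Algebra.smul_def]

lemma adjoinSqrtEquiv_mul (x y : R × R) :
    adjoinSqrtEquiv c x * adjoinSqrtEquiv c y =
      adjoinSqrtEquiv c (x.1 * y.1 + c * x.2 * y.2, x.1 * y.2 + x.2 * y.1) := by
  have hroot : AdjoinRoot.root (X ^ 2 - C c) ^ 2 = algebraMap R _ c := by
    have := AdjoinRoot.mk_self (f := X ^ 2 - C c)
    rwa [map_sub, map_pow, AdjoinRoot.mk_X, AdjoinRoot.mk_C, sub_eq_zero] at this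
  simp only [adjoinSqrtEquiv_apply, map_add, map_mul]
  linear_combination (algebraMap R _ x.2 * algebraMap R _ y.2) * hroot

end AdjoinSqrt

namespace ZMod

lemma card_filter_isUnit (n : ℕ) [NeZero n] : #{x : ZMod n | IsUnit x} = n.totient := by
  rw [← card_units_eq_totient, ← Fintype.card_subtype, ← Nat.card_eq_fintype_card,
    ← Nat.card_eq_fintype_card]
  exact (Nat.card_congr Submonoid.unitsTypeEquivIsUnitSubmonoid.toEquiv).symm

lemma castHom_eq_zero_iff {m n : ℕ} [NeZero n] (h : m ∣ n) (x : ZMod n) :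
    castHom h (ZMod m) x = 0 ↔ m ∣ x.val := by
  rw [castHom_apply, cast_eq_val, natCast_eq_zero_iff]

lemma card_filter_dvd_val {m n : ℕ} [NeZero n] (h : m ∣ n) :
    #{x : ZMod n | m ∣ x.val} = n / m := by
  have : NeZero m := ⟨by rintro rfl; exact NeZero.ne n (zero_dvd_iff.1 h)⟩
  let f := (castHom h (ZMod m)).toAddMonoidHom
  have hker : Nat.card f.ker = #{x : ZMod n | m ∣ x.val} := by
    rw [← Fintype.card_subtype, ← Nat.card_eq_fintype_card]
    exact Nat.card_congr (Equiv.subtypeEquivRight fun x => castHom_eq_zero_iff h x)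
  have hrange : f.range = ⊤ := AddMonoidHom.range_eq_top.2 (castHom_surjective h)
  have hmul := f.ker.card_mul_index
  rw [AddSubgroup.index_ker, hrange, AddSubgroup.card_top, Nat.card_zmod, Nat.card_zmod] at hmul
  rw [← hker]
  exact Nat.eq_div_of_mul_eq_left (NeZero.ne m) hmul

lemma natCast_dvd_iff_dvd_val {m n : ℕ} [NeZero n] (h : m ∣ n) (x : ZMod n) :
    (m : ZMod n) ∣ x ↔ m ∣ x.val := by
  constructor
  · rintro ⟨z, rfl⟩
    rw [← castHom_eq_zero_iff h, map_mul, map_natCast, natCast_self, zero_mul]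
  · rintro ⟨c, hc⟩
    exact ⟨c, by rw [← natCast_zmod_val x, hc, Nat.cast_mul]⟩

lemma dvd_val_mul_iff {m n : ℕ} [NeZero n] (h : m ∣ n) (x y : ZMod n) :
    m ∣ (x * y).val ↔ m ∣ x.val * y.val := by
  rw [val_mul, Nat.dvd_mod_iff h]

end ZMod

/-- `min r (v_ℓ n)`, where `v_ℓ 0 = ∞`. -/
def truncVal (ℓ r n : ℕ) : ℕ := Nat.findGreatest (fun i => ℓ ^ i ∣ n) r

lemma truncVal_eq_iff {ℓ r n j : ℕ} :
    truncVal ℓ r n = j ↔ j ≤ r ∧ ℓ ^ j ∣ n ∧ (j < r → ¬ ℓ ^ (j + 1) ∣ n) := by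
  rw [truncVal, Nat.findGreatest_eq_iff]
  constructor
  · rintro ⟨hjr, hdvd, hmax⟩
    refine ⟨hjr, ?_, fun hj => hmax j.lt_succ_self hj⟩
    rcases eq_or_ne j 0 with rfl | hj0
    · simp
    · exact hdvd hj0
  · rintro ⟨hjr, hdvd, hmax⟩
    exact ⟨hjr, fun _ => hdvd, fun i hji hir hi =>
      hmax (by omega) ((pow_dvd_pow ℓ hji).trans hi)⟩

lemma pow_dvd_mul_iff_of_truncVal_eq {ℓ r a b j : ℕ} (hℓ : ℓ.Prime) (h : truncVal ℓ r a = j) :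
    ℓ ^ r ∣ a * b ↔ ℓ ^ (r - j) ∣ b := by
  obtain ⟨hjr, ⟨c, rfl⟩, hmax⟩ := truncVal_eq_iff.1 h
  have hcop : (ℓ ^ (r - j)).Coprime c := by
    rcases hjr.lt_or_eq with hjr | rfl
    · refine Nat.Coprime.pow_left _ ((Nat.Prime.coprime_iff_not_dvd hℓ).2 fun hc => hmax hjr ?_)
      rw [pow_succ]
      exact mul_dvd_mul_left _ hc
    · simp
  rw [← Nat.pow_sub_mul_pow ℓ hjr, mul_comm (ℓ ^ (r - j)), mul_assoc,
    Nat.mul_dvd_mul_iff_left (pow_pos hℓ.pos j), hcop.dvd_mul_left]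

section PrimePower

variable {ℓ k : ℕ} [Fact ℓ.Prime]

lemma card_filter_pow_dvd_val {j : ℕ} (hj : j ≤ k) :
    #{x : ZMod (ℓ ^ k) | ℓ ^ j ∣ x.val} = ℓ ^ (k - j) := by
  rw [ZMod.card_filter_dvd_val (pow_dvd_pow ℓ hj), Nat.pow_div hj (Fact.out : ℓ.Prime).pos]

lemma card_filter_isUnit_prime_pow (hk : k ≠ 0) :
    #{x : ZMod (ℓ ^ k) | IsUnit x} = ℓ ^ (k - 1) * (ℓ - 1) := by
  rw [ZMod.card_filter_isUnit, Nat.totient_prime_pow Fact.out (Nat.pos_of_ne_zero hk)]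

lemma card_filter_truncVal_eq_of_lt {r j : ℕ} (hjr : j < r) (hrk : r ≤ k) :
    #{x : ZMod (ℓ ^ k) | truncVal ℓ r x.val = j} = ℓ ^ (k - j - 1) * (ℓ - 1) := by
  have hclass (x : ZMod (ℓ ^ k)) :
      truncVal ℓ r x.val = j ↔ ℓ ^ j ∣ x.val ∧ ¬ ℓ ^ (j + 1) ∣ x.val := by
    simp [truncVal_eq_iff, hjr.le, hjr]
  have hsub : ∀ x ∈ univ, ℓ ^ (j + 1) ∣ (x : ZMod (ℓ ^ k)).val → ℓ ^ j ∣ x.val :=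
    fun _ _ => (pow_dvd_pow ℓ j.le_succ).trans
  rw [filter_congr fun x _ => hclass x, filter_and_not,
    card_sdiff_of_subset (monotone_filter_right _ hsub), card_filter_pow_dvd_val (by omega),
    card_filter_pow_dvd_val (by omega)]
  obtain ⟨m, hm⟩ : ∃ m, k - j = m + 1 := ⟨k - j - 1, by omega⟩
  rw [hm, show k - (j + 1) = m by omega, Nat.add_sub_cancel, pow_succ, Nat.mul_sub_one]

lemma card_filter_truncVal_eq_self {r : ℕ} (hrk : r ≤ k) :
    #{x : ZMod (ℓ ^ k) | truncVal ℓ r x.val = r} = ℓ ^ (k - r) := by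
  simp only [truncVal_eq_iff, le_refl, lt_irrefl, false_implies, and_true, true_and]
  exact card_filter_pow_dvd_val hrk

lemma isUnit_iff_castHom_ne_zero (hk : k ≠ 0) (x : ZMod (ℓ ^ k)) :
    IsUnit x ↔ ZMod.castHom (dvd_pow_self ℓ hk) (ZMod ℓ) x ≠ 0 := by
  rw [ne_eq, ZMod.castHom_eq_zero_iff, ← ZMod.isUnit_natCast_iff_not_dvd_pow Fact.out
    (Nat.pos_of_ne_zero hk), ZMod.natCast_zmod_val]

lemma castHom_eq_of_dvd_val_sub (hk : k ≠ 0) {a b : ZMod (ℓ ^ k)} (h : ℓ ∣ (b - a).val) :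
    ZMod.castHom (dvd_pow_self ℓ hk) (ZMod ℓ) b = ZMod.castHom (dvd_pow_self ℓ hk) (ZMod ℓ) a := by
  rwa [← sub_eq_zero, ← map_sub, ZMod.castHom_eq_zero_iff]

lemma isUnit_mul_sub_mul_sq_iff_of_dvd_val (hk : k ≠ 0) (D : ZMod (ℓ ^ k))
    {a b c : ZMod (ℓ ^ k)} (hc : ℓ ∣ c.val) : IsUnit (a * b - D * c ^ 2) ↔ IsUnit a ∧ IsUnit b := by
  simp only [isUnit_iff_castHom_ne_zero hk, map_sub, map_mul, map_pow,
    (ZMod.castHom_eq_zero_iff _ c).2 hc]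
  simp

lemma isUnit_mul_sub_mul_sq_of_not_dvd_val (hk : k ≠ 0) {D : ℤ} (hD : ¬ IsSquare (D : ZMod ℓ))
    {a b c : ZMod (ℓ ^ k)} (hc : ¬ ℓ ∣ c.val) (hab : ℓ ∣ (b - a).val) :
    IsUnit (a * b - D * c ^ 2) := by
  rw [isUnit_iff_castHom_ne_zero hk, map_sub, map_mul, map_mul, map_pow, map_intCast,
    castHom_eq_of_dvd_val_sub hk hab]
  refine mul_self_sub_mul_sq_ne_zero hD _ ?_
  rwa [ne_eq, ZMod.castHom_eq_zero_iff]

lemma isUnit_iff_of_dvd_val_sub (hk : k ≠ 0) {a b : ZMod (ℓ ^ k)} (h : ℓ ∣ (b - a).val) :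
    IsUnit a ↔ IsUnit b := by
  rw [isUnit_iff_castHom_ne_zero hk, isUnit_iff_castHom_ne_zero hk, castHom_eq_of_dvd_val_sub hk h]

end PrimePower

/-- The condition `pairCond` on the pair `(a₀ + a₁ α, d₀ - a₁ α)`, in coordinates. -/
def CoordCond (ℓ k : ℕ) (D : ℤ) (r : ℕ) (a₁ a₀ d₀ : ZMod (ℓ ^ k)) : Prop :=
  IsUnit (a₀ * d₀ - D * a₁ ^ 2) ∧ ℓ ^ r ∣ (a₁ * (d₀ - a₀)).val

instance (ℓ k : ℕ) [NeZero (ℓ ^ k)] (D : ℤ) (r : ℕ) (a₁ a₀ d₀ : ZMod (ℓ ^ k)) :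
    Decidable (CoordCond ℓ k D r a₁ a₀ d₀) := by
  unfold CoordCond; infer_instance

section Counting

variable {ℓ k : ℕ} [Fact ℓ.Prime] {D : ℤ} {r : ℕ}

lemma coordCond_iff_of_truncVal_eq (hD : ¬ IsSquare (D : ZMod ℓ)) (hr1 : 1 ≤ r) (hrk : r ≤ k)
    {j : ℕ} {a₁ : ZMod (ℓ ^ k)} (hj : truncVal ℓ r a₁.val = j) (a₀ d₀ : ZMod (ℓ ^ k)) :
    CoordCond ℓ k D r a₁ a₀ d₀ ↔ (0 < j → IsUnit a₀ ∧ IsUnit d₀) ∧ ℓ ^ (r - j) ∣ (d₀ - a₀).val := by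
  have hk : k ≠ 0 := by omega
  rw [CoordCond, ZMod.dvd_val_mul_iff (pow_dvd_pow ℓ hrk),
    pow_dvd_mul_iff_of_truncVal_eq Fact.out hj]
  obtain ⟨-, hdvd, hmax⟩ := truncVal_eq_iff.1 hj
  rcases j.eq_zero_or_pos with rfl | hj0
  · simp only [lt_irrefl, false_implies, true_and, and_iff_right_iff_imp, Nat.sub_zero]
    exact fun hw => isUnit_mul_sub_mul_sq_of_not_dvd_val hk hD (by simpa using hmax hr1)
      ((dvd_pow_self ℓ (by omega)).trans hw)
  · rw [isUnit_mul_sub_mul_sq_iff_of_dvd_val hk _ ((dvd_pow_self ℓ hj0.ne').trans hdvd)]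
    simp [hj0]

lemma card_filter_coordCond_truncVal_eq (hD : ¬ IsSquare (D : ZMod ℓ)) (hr1 : 1 ≤ r)
    (hrk : r ≤ k) (j : ℕ) :
    #{t : ZMod (ℓ ^ k) × ZMod (ℓ ^ k) × ZMod (ℓ ^ k) |
        CoordCond ℓ k D r t.1 t.2.1 t.2.2 ∧ truncVal ℓ r t.1.val = j} =
      #{a : ZMod (ℓ ^ k) | truncVal ℓ r a.val = j} *
        #{p : ZMod (ℓ ^ k) × ZMod (ℓ ^ k) |
          (0 < j → IsUnit p.1 ∧ IsUnit p.2) ∧ ℓ ^ (r - j) ∣ (p.2 - p.1).val} := by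
  rw [← card_filter_and_prod]
  congr 1
  ext ⟨a₁, a₀, d₀⟩
  simp only [mem_filter, mem_univ, true_and]
  rw [and_comm]
  exact and_congr_right fun hj => coordCond_iff_of_truncVal_eq hD hr1 hrk hj a₀ d₀

lemma card_filter_coordCond_truncVal_eq_zero (hD : ¬ IsSquare (D : ZMod ℓ)) (hr1 : 1 ≤ r)
    (hrk : r ≤ k) :
    #{t : ZMod (ℓ ^ k) × ZMod (ℓ ^ k) × ZMod (ℓ ^ k) |
        CoordCond ℓ k D r t.1 t.2.1 t.2.2 ∧ truncVal ℓ r t.1.val = 0} =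
      ℓ ^ (3 * k - r - 2) * (ℓ * (ℓ - 1)) := by
  have hpairs :
      #{p : ZMod (ℓ ^ k) × ZMod (ℓ ^ k) | ℓ ^ r ∣ (p.2 - p.1).val} = ℓ ^ k * ℓ ^ (k - r) := by
    simpa [card_filter_pow_dvd_val hrk] using
      card_filter_fst_and_sub_fst (fun _ : ZMod (ℓ ^ k) => True) (fun w => ℓ ^ r ∣ w.val)
  simp only [card_filter_coordCond_truncVal_eq hD hr1 hrk, card_filter_truncVal_eq_of_lt hr1 hrk,
    lt_irrefl, false_implies, true_and, Nat.sub_zero, hpairs]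
  rw [show 3 * k - r - 2 = (k - 1) + (k - 1) + (k - r) by omega,
    show ℓ ^ k = ℓ ^ (k - 1) * ℓ by rw [← pow_succ]; congr 1; omega, pow_add, pow_add]
  ring

lemma card_filter_coordCond_truncVal_eq_of_pos (hD : ¬ IsSquare (D : ZMod ℓ)) (hrk : r ≤ k)
    {j : ℕ} (hj0 : 0 < j) (hjr : j ≤ r) :
    #{t : ZMod (ℓ ^ k) × ZMod (ℓ ^ k) × ZMod (ℓ ^ k) |
        CoordCond ℓ k D r t.1 t.2.1 t.2.2 ∧ truncVal ℓ r t.1.val = j} =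
      ℓ ^ (3 * k - r - 2) * (ℓ - 1) ^ 2 := by
  have hk : k ≠ 0 := by omega
  rw [card_filter_coordCond_truncVal_eq hD (hj0.trans_le hjr) hrk]
  simp only [hj0, true_implies]
  rcases hjr.lt_or_eq with hjr | rfl
  · have hunits (p : ZMod (ℓ ^ k) × ZMod (ℓ ^ k)) :
        (IsUnit p.1 ∧ IsUnit p.2) ∧ ℓ ^ (r - j) ∣ (p.2 - p.1).val ↔
          IsUnit p.1 ∧ ℓ ^ (r - j) ∣ (p.2 - p.1).val := by
      refine ⟨fun h => ⟨h.1.1, h.2⟩, fun h => ⟨⟨h.1, ?_⟩, h.2⟩⟩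
      exact (isUnit_iff_of_dvd_val_sub hk ((dvd_pow_self ℓ (by omega)).trans h.2)).1 h.1
    rw [filter_congr fun p _ => hunits p, card_filter_fst_and_sub_fst (IsUnit ·)
      (fun w : ZMod (ℓ ^ k) => ℓ ^ (r - j) ∣ w.val), card_filter_truncVal_eq_of_lt hjr hrk,
      card_filter_isUnit_prime_pow hk, card_filter_pow_dvd_val (by omega),
      show 3 * k - r - 2 = (k - j - 1) + (k - 1) + (k - (r - j)) by omega, pow_add, pow_add]
    ring
  · simp only [Nat.sub_self, pow_zero, one_dvd, and_true]
    rw [card_filter_and_prod (IsUnit ·) (IsUnit ·), card_filter_truncVal_eq_self hrk,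
      card_filter_isUnit_prime_pow hk,
      show 3 * k - j - 2 = (k - j) + (k - 1) + (k - 1) by omega, pow_add, pow_add]
    ring

theorem card_filter_coordCond (hD : ¬ IsSquare (D : ZMod ℓ)) (hr1 : 1 ≤ r) (hrk : r ≤ k) :
    #{t : ZMod (ℓ ^ k) × ZMod (ℓ ^ k) × ZMod (ℓ ^ k) | CoordCond ℓ k D r t.1 t.2.1 t.2.2} =
      ℓ ^ (3 * k - r - 2) * (ℓ - 1) * (r * ℓ - r + ℓ) := by
  rw [card_eq_sum_card_fiberwise (f := fun t => truncVal ℓ r t.1.val) (t := range (r + 1))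
    fun _ _ => mem_range.2 (Nat.lt_succ_of_le (Nat.findGreatest_le r))]
  simp only [filter_filter]
  rw [sum_range_succ', sum_congr rfl fun j hj =>
      card_filter_coordCond_truncVal_eq_of_pos hD hrk j.succ_pos (mem_range.1 hj),
    sum_const, card_range, smul_eq_mul, card_filter_coordCond_truncVal_eq_zero hD hr1 hrk,
    ← Nat.mul_sub_one]
  ring

end Counting

lemma pairCond_adjoinSqrtEquiv_iff {ℓ k : ℕ} [Fact (1 < ℓ ^ k)] {D : ℤ} {r : ℕ} (hrk : r ≤ k)
    (x y : ZMod (ℓ ^ k) × ZMod (ℓ ^ k)) :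
    pairCond ℓ k D r (adjoinSqrtEquiv _ x) (adjoinSqrtEquiv _ y) ↔
      y.2 = -x.2 ∧ CoordCond ℓ k D r x.2 x.1 y.1 := by
  have halg (z : ZMod (ℓ ^ k)) : algebraMap _ (InertRing ℓ k D) z = adjoinSqrtEquiv _ (z, 0) := by
    simp [adjoinSqrtEquiv_apply]
  have hrhs (u z : ZMod (ℓ ^ k)) : algebraMap _ (InertRing ℓ k D) u +
      alphaI ℓ k D * (ℓ : InertRing ℓ k D) ^ r * algebraMap _ (InertRing ℓ k D) z =
        adjoinSqrtEquiv _ (u, ℓ ^ r * z) := by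
    rw [← map_natCast (algebraMap (ZMod (ℓ ^ k)) (InertRing ℓ k D))]
    simp only [adjoinSqrtEquiv_apply, alphaI, map_mul, map_pow]
    ring
  obtain ⟨a₀, a₁⟩ := x
  obtain ⟨d₀, d₁⟩ := y
  unfold pairCond
  simp_rw [adjoinSqrtEquiv_mul, hrhs, ← (adjoinSqrtEquiv _).map_add, halg,
    (adjoinSqrtEquiv _).injective.eq_iff, Prod.ext_iff]
  rw [CoordCond, ← ZMod.natCast_dvd_iff_dvd_val (pow_dvd_pow ℓ hrk), Nat.cast_pow]
  dsimp only [Prod.fst_add, Prod.snd_add]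
  constructor
  · rintro ⟨⟨u, z, hu, hz⟩, -, -, hd⟩
    obtain rfl : d₁ = -a₁ := by linear_combination hd
    refine ⟨rfl, ?_, z, by linear_combination hz⟩
    rw [show a₀ * d₀ - D * a₁ ^ 2 = u by linear_combination hu]
    exact u.isUnit
  · rintro ⟨rfl, hu, z, hz⟩
    exact ⟨⟨hu.unit, z, by rw [hu.unit_spec]; ring, by linear_combination hz⟩, _, rfl, by ring⟩

lemma card_pairCond_eq_card_coordCond {ℓ k : ℕ} [Fact (1 < ℓ ^ k)] {D : ℤ} {r : ℕ}
    (hrk : r ≤ k) :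
    Nat.card {p : InertRing ℓ k D × InertRing ℓ k D | pairCond ℓ k D r p.1 p.2} =
      Nat.card {t : ZMod (ℓ ^ k) × ZMod (ℓ ^ k) × ZMod (ℓ ^ k) |
        CoordCond ℓ k D r t.1 t.2.1 t.2.2} := by
  let f (t : ZMod (ℓ ^ k) × ZMod (ℓ ^ k) × ZMod (ℓ ^ k)) : InertRing ℓ k D × InertRing ℓ k D :=
    (adjoinSqrtEquiv _ (t.2.1, t.1), adjoinSqrtEquiv _ (t.2.2, -t.1))
  have hf : f.Injective := by
    rintro ⟨a₁, a₀, d₀⟩ ⟨b₁, b₀, e₀⟩ h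
    simp only [f, Prod.ext_iff, (adjoinSqrtEquiv _).injective.eq_iff] at h
    simp [h]
  have himage : {p | pairCond ℓ k D r p.1 p.2} = f '' {t | CoordCond ℓ k D r t.1 t.2.1 t.2.2} := by
    ext ⟨a, d⟩
    obtain ⟨⟨a₀, a₁⟩, rfl⟩ := (adjoinSqrtEquiv (D : ZMod (ℓ ^ k))).surjective a
    obtain ⟨⟨d₀, d₁⟩, rfl⟩ := (adjoinSqrtEquiv (D : ZMod (ℓ ^ k))).surjective d
    rw [Set.mem_image, Set.mem_ofPred_eq, pairCond_adjoinSqrtEquiv_iff hrk]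
    constructor
    · rintro ⟨rfl, hc⟩
      exact ⟨(a₁, a₀, d₀), hc, rfl⟩
    · rintro ⟨⟨b₁, b₀, e₀⟩, hc, h⟩
      simp only [f, Prod.ext_iff, (adjoinSqrtEquiv _).injective.eq_iff] at h
      obtain ⟨⟨rfl, rfl⟩, rfl, rfl⟩ := h
      exact ⟨rfl, hc⟩
  rw [himage, Nat.card_image_of_injective hf]

theorem stmt_14_general (ℓ k : ℕ) (hℓ : ℓ.Prime) (D : ℤ)
    (hD : ¬ IsSquare (D : ZMod ℓ)) (r : ℕ) (hr1 : 1 ≤ r) (hrk : r ≤ k) :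
    Nat.card {p : InertRing ℓ k D × InertRing ℓ k D | pairCond ℓ k D r p.1 p.2} =
      ℓ ^ (3 * k - r - 2) * (ℓ - 1) * (r * ℓ - r + ℓ) := by
  have : Fact ℓ.Prime := ⟨hℓ⟩
  have : Fact (1 < ℓ ^ k) := ⟨Nat.one_lt_pow (by omega) hℓ.one_lt⟩
  rw [card_pairCond_eq_card_coordCond hrk, Nat.card_eq_card_toFinset, Set.toFinset_ofPred,
    card_filter_coordCond hD hr1 hrk]

/-- For `1 ≤ r ≤ k`, the number of pairs `(a,d) ∈ R_k²` satisfying both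
conditions equals `ℓ^(3k−r−2)(ℓ−1)(rℓ − r + ℓ)`. -/
theorem stmt_14 (ℓ k : ℕ) (hℓ : ℓ.Prime) (hodd : ℓ ≠ 2) (hk : 1 ≤ k) (D : ℤ)
    (hD : ¬ IsSquare (D : ZMod ℓ)) (r : ℕ) (hr1 : 1 ≤ r) (hrk : r ≤ k) :
    Nat.card {p : InertRing ℓ k D × InertRing ℓ k D | pairCond ℓ k D r p.1 p.2} =
      ℓ ^ (3 * k - r - 2) * (ℓ - 1) * (r * ℓ - r + ℓ) :=
  stmt_14_general ℓ k hℓ D hD r hr1 hrk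
end

section
/- Let ℓ be a prime, k ≥ 1, and D any integer. Let R_k = (ℤ/ℓᵏℤ)[X]/(X² − D), and let Mᵗ_{ℓᵏ} = {σ ∈ M₂(R_k) | tr σ lies in the image of ℤ/ℓᵏℤ and det σ lies in the image of ℤ/ℓᵏℤ}, where M₂(R_k) is the set of all 2×2 matrices over R_k. Then #Mᵗ_{ℓᵏ} ≤ 3·ℓ^{6k}. -/
open Matrix Polynomial

open Finset

/-!
Write the entries of `σ = !![a, b; c, d]` in `R_k ≅ (ℤ/ℓᵏ)[√D]` as `u = u₀ + u₁√D`. The trace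
condition says `a₁ = -d₁`, and then the determinant condition says `b₀c₁ + b₁c₀ = d₁(a₀ - d₀)`.
So `σ` is determined by `(a₀, d₀, d₁)` and a solution of `xy + zw = t` over `ℤ/ℓᵏ` for one value
of `t`, and it suffices that this equation has at most `2ℓ^{3k}` solutions. If `x` or `z` is a
unit, `y` or `w` is determined by the other three coordinates: at most `ℓ^{3k}` solutions. If `ℓ`
divides `x` and `z`, then `(x/ℓ, y, z/ℓ, w)` reduces to a solution modulo `ℓ^{k-1}` of the equation
for `t/ℓ`, and each such solution arises this way at most `ℓ²` times (`x`, `z` are determined, and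
`y`, `w` only modulo `ℓ^{k-1}`). By induction this gives at most `ℓ²·2ℓ^{3(k-1)} ≤ ℓ^{3k}` more.
-/

theorem RingHom.map_eq_map_iff_mul_eq_mul {R S : Type*} [Ring R] [Ring S] {π : S →+* R} {p : S}
    (hπ : ∀ s, π s = 0 ↔ p * s = 0) (s s' : S) : π s = π s' ↔ p * s = p * s' := by
  rw [← sub_eq_zero, ← map_sub, hπ, mul_sub, sub_eq_zero]

theorem card_filter_map_quot_eq_le {R S : Type*} [Ring R] [Ring S] [Fintype S] [DecidableEq R]
    (π : S →+* R) (p : S) (hπ : ∀ s, π s = 0 ↔ p * s = 0)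
    {c : ℕ} (hc : ∀ r, #{s | π s = r} ≤ c) (q : S → S) (T : Finset (S × S × S × S))
    (hT : ∀ v ∈ T, v.1 = p * q v.1 ∧ v.2.2.1 = p * q v.2.2.1) (u : R × R × R × R) :
    #{v ∈ T | (π (q v.1), π v.2.1, π (q v.2.2.1), π v.2.2.2) = u} ≤ c ^ 2 := by
  calc #{v ∈ T | (π (q v.1), π v.2.1, π (q v.2.2.1), π v.2.2.2) = u}
      ≤ #(({s | π s = u.2.1} : Finset S) ×ˢ ({s | π s = u.2.2.2} : Finset S)) := by
        refine card_le_card_of_injOn (fun v => (v.2.1, v.2.2.2)) ?_ ?_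
        · intro v hv
          obtain ⟨-, rfl⟩ := mem_filter.1 hv
          simp
        · intro v hv v' hv' h
          obtain ⟨hvT, hvu⟩ := mem_filter.1 hv
          obtain ⟨hvT', rfl⟩ := mem_filter.1 hv'
          obtain ⟨hx, hz⟩ := hT v hvT
          obtain ⟨hx', hz'⟩ := hT v' hvT'
          simp only [Prod.ext_iff, RingHom.map_eq_map_iff_mul_eq_mul hπ] at hvu h
          ext
          · rw [hx, hx', hvu.1]
          · exact h.1
          · rw [hz, hz', hvu.2.2.1]
          · exact h.2
    _ ≤ c ^ 2 := by rw [card_product, sq]; exact Nat.mul_le_mul (hc _) (hc _)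

section HyperbolicLevelSet

variable {R : Type*} [CommRing R] [Fintype R] [DecidableEq R]

def hyperbolicLevelSet (t : R) : Finset (R × R × R × R) :=
  {v | v.1 * v.2.1 + v.2.2.1 * v.2.2.2 = t}

@[simp]
theorem mem_hyperbolicLevelSet {t : R} {v : R × R × R × R} :
    v ∈ hyperbolicLevelSet t ↔ v.1 * v.2.1 + v.2.2.1 * v.2.2.2 = t := by
  simp [hyperbolicLevelSet]

theorem card_hyperbolicLevelSet_filter_isUnit_le (t : R) :
    #{v ∈ hyperbolicLevelSet t | IsUnit v.1 ∨ IsUnit v.2.2.1} ≤ Fintype.card R ^ 3 := by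
  calc #{v ∈ hyperbolicLevelSet t | IsUnit v.1 ∨ IsUnit v.2.2.1}
      ≤ #(univ : Finset (R × R × R)) := by
        refine card_le_card_of_injOn
          (fun v => (v.1, v.2.2.1, if IsUnit v.1 then v.2.2.2 else v.2.1))
          (fun _ _ => mem_coe.2 (mem_univ _)) ?_
        rintro ⟨x, y, z, w⟩ hv ⟨x', y', z', w'⟩ hv' h
        simp only [coe_filter, mem_hyperbolicLevelSet, Set.mem_ofPred_eq] at hv hv'
        simp only [Prod.mk.injEq] at h
        obtain ⟨rfl, rfl, h⟩ := h
        by_cases hx : IsUnit x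
        · simp only [hx, if_true] at h
          subst h
          have := hx.mul_left_cancel (add_right_cancel (hv.1.trans hv'.1.symm))
          simp [this]
        · simp only [hx, if_false] at h
          subst h
          have hz := hv.2.resolve_left hx
          have := hz.mul_left_cancel (add_left_cancel (hv.1.trans hv'.1.symm))
          simp [this]
    _ = Fintype.card R ^ 3 := by rw [card_univ, Fintype.card_prod, Fintype.card_prod]; ring

variable {S : Type*} [CommRing S] [Fintype S] [DecidableEq S]

theorem card_hyperbolicLevelSet_filter_dvd_le (π : S →+* R) (p : S)
    (hπ : ∀ s, π s = 0 ↔ p * s = 0) {c M : ℕ} (hc : ∀ r, #{s | π s = r} ≤ c)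
    (hM : ∀ u : R, #(hyperbolicLevelSet u) ≤ M) (t : S) :
    #{v ∈ hyperbolicLevelSet t | p ∣ v.1 ∧ p ∣ v.2.2.1} ≤ c ^ 2 * M := by
  have : ∀ s : S, ∃ a, p ∣ s → s = p * a := fun s =>
    (em (p ∣ s)).elim (fun ⟨a, h⟩ => ⟨a, fun _ => h⟩) fun h => ⟨0, (absurd · h)⟩
  choose q hq using this
  set B := {v ∈ hyperbolicLevelSet t | p ∣ v.1 ∧ p ∣ v.2.2.1}
  have mem_B {v : S × S × S × S} (hv : v ∈ B) : v.1 = p * q v.1 ∧ v.2.2.1 = p * q v.2.2.1 ∧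
      p * (q v.1 * v.2.1 + q v.2.2.1 * v.2.2.2) = t := by
    obtain ⟨hv, hx, hz⟩ := by simpa only [B, mem_filter, mem_hyperbolicLevelSet] using hv
    refine ⟨hq _ hx, hq _ hz, ?_⟩
    rw [← hv]
    linear_combination (-v.2.1) * hq _ hx - v.2.2.2 * hq _ hz
  rcases B.eq_empty_or_nonempty with hB | ⟨v₀, hv₀⟩
  · rw [hB, card_empty]; exact Nat.zero_le _
  obtain ⟨-, -, rfl⟩ := mem_B hv₀
  -- `p * ker π = 0`, so `(p * a) * y` only depends on `π a` and `π y`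
  refine (card_le_mul_card_image_of_maps_to
    (f := fun v => (π (q v.1), π v.2.1, π (q v.2.2.1), π v.2.2.2))
    (t := hyperbolicLevelSet (π (q v₀.1 * v₀.2.1 + q v₀.2.2.1 * v₀.2.2.2))) ?_ _
    fun u _ => card_filter_map_quot_eq_le π p hπ hc q B
      (fun v hv => (mem_B hv).imp_right And.left) u).trans
    (Nat.mul_le_mul_left _ (hM _))
  intro v hv
  rw [mem_hyperbolicLevelSet, ← map_mul, ← map_mul, ← map_add,
    RingHom.map_eq_map_iff_mul_eq_mul hπ, (mem_B hv).2.2]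

theorem card_hyperbolicLevelSet_le_of_ringHom (π : S →+* R) (p : S)
    (hπ : ∀ s, π s = 0 ↔ p * s = 0) (hp : ∀ s, ¬IsUnit s → p ∣ s) {c M : ℕ}
    (hc : ∀ r, #{s | π s = r} ≤ c) (hM : ∀ u : R, #(hyperbolicLevelSet u) ≤ M) (t : S) :
    #(hyperbolicLevelSet t) ≤ Fintype.card S ^ 3 + c ^ 2 * M := by
  rw [← card_filter_add_card_filter_not (fun v => IsUnit v.1 ∨ IsUnit v.2.2.1)]
  refine add_le_add (card_hyperbolicLevelSet_filter_isUnit_le t)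
    ((card_le_card ?_).trans (card_hyperbolicLevelSet_filter_dvd_le π p hπ hc hM t))
  intro v hv
  simp only [mem_filter, not_or] at hv ⊢
  exact ⟨hv.1, hp _ hv.2.1, hp _ hv.2.2⟩

end HyperbolicLevelSet

theorem AddMonoidHom.card_fiber_mul_card_of_surjective {G H : Type*} [AddGroup G] [Fintype G]
    [AddMonoid H] [Fintype H] [DecidableEq H] (f : G →+ H) (hf : Function.Surjective f) (h : H) :
    #{g | f g = h} * Fintype.card H = Fintype.card G := by
  have := card_eq_sum_card_fiberwise (s := univ) (t := univ) (f := f) (by simp)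
  rw [sum_congr rfl fun h' _ => AddMonoidHom.card_fiber_eq_of_mem_range f (hf h') (hf h),
    sum_const, card_univ, card_univ, smul_eq_mul] at this
  rw [this, mul_comm]

namespace ZMod

variable {ℓ : ℕ} [NeZero ℓ] (k : ℕ)

theorem card_filter_castHom_pow_succ_eq (r : ZMod (ℓ ^ k)) :
    #{s : ZMod (ℓ ^ (k + 1)) | castHom (pow_dvd_pow ℓ k.le_succ) _ s = r} = ℓ := by
  have h := AddMonoidHom.card_fiber_mul_card_of_surjective
    (castHom (pow_dvd_pow ℓ k.le_succ) (ZMod (ℓ ^ k))).toAddMonoidHom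
    (castHom_surjective (pow_dvd_pow ℓ k.le_succ)) r
  rw [ZMod.card, ZMod.card] at h
  exact Nat.eq_of_mul_eq_mul_right (pow_pos (Nat.pos_of_neZero ℓ) k) (h.trans (pow_succ' ℓ k))

theorem castHom_pow_succ_eq_zero_iff (s : ZMod (ℓ ^ (k + 1))) :
    castHom (pow_dvd_pow ℓ k.le_succ) (ZMod (ℓ ^ k)) s = 0 ↔
      (ℓ : ZMod (ℓ ^ (k + 1))) * s = 0 := by
  rw [← natCast_zmod_val s, map_natCast, ← Nat.cast_mul, natCast_eq_zero_iff,
    natCast_eq_zero_iff]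
  exact (Nat.mul_dvd_mul_iff_left (Nat.pos_of_neZero ℓ)).symm.trans (pow_succ' ℓ k ▸ Iff.rfl)

theorem dvd_of_not_isUnit_prime_pow (hℓ : ℓ.Prime) {s : ZMod (ℓ ^ k)} (hs : ¬IsUnit s) :
    (ℓ : ZMod (ℓ ^ k)) ∣ s := by
  rw [← natCast_zmod_val s, isUnit_iff_coprime] at hs
  obtain ⟨m, hm⟩ : ℓ ∣ s.val := by
    by_contra h
    exact hs (Nat.Coprime.pow_left k ((hℓ.coprime_iff_not_dvd).2 h)).symm
  exact ⟨m, by rw [← natCast_zmod_val s, hm, Nat.cast_mul]⟩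

theorem card_hyperbolicLevelSet_prime_pow_le (hℓ : ℓ.Prime) (t : ZMod (ℓ ^ k)) :
    #(hyperbolicLevelSet t) ≤ 2 * ℓ ^ (3 * k) := by
  induction k with
  | zero => exact (card_le_univ _).trans (by simp [Fintype.card_prod])
  | succ k ih =>
    refine (card_hyperbolicLevelSet_le_of_ringHom (castHom (pow_dvd_pow ℓ k.le_succ) _) (ℓ : _)
      (castHom_pow_succ_eq_zero_iff k) (fun _ => dvd_of_not_isUnit_prime_pow _ hℓ)
      (fun r => (card_filter_castHom_pow_succ_eq k r).le) ih t).trans ?_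
    rw [ZMod.card]
    have := hℓ.two_le
    calc (ℓ ^ (k + 1)) ^ 3 + ℓ ^ 2 * (2 * ℓ ^ (3 * k))
        = ℓ ^ (3 * k + 2) * (ℓ + 2) := by ring
      _ ≤ ℓ ^ (3 * k + 2) * (2 * ℓ) := by gcongr; omega
      _ = 2 * ℓ ^ (3 * (k + 1)) := by ring

end ZMod

namespace AdjoinRoot

variable {R : Type*} [CommRing R] (d : R)

noncomputable def equivQuadraticAlgebra :
    AdjoinRoot (X ^ 2 - C d) ≃ₐ[R] QuadraticAlgebra R d 0 :=
  AlgEquiv.ofAlgHom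
    (liftAlgHom _ (Algebra.ofId R _) QuadraticAlgebra.omega (by
      simp [QuadraticAlgebra.omega_mul_omega_eq_algebraMap, sq]))
    (QuadraticAlgebra.lift ⟨root _, by
      have h := eval₂_root (X ^ 2 - C d)
      rw [eval₂_sub, eval₂_X_pow, eval₂_C, sub_eq_zero] at h
      rw [← sq, h, zero_smul, add_zero, Algebra.smul_def, mul_one]
      rfl⟩)
    (QuadraticAlgebra.algHom_ext (by simp))
    (algHom_ext (by simp))

end AdjoinRoot

section ScalarTraceDet

variable (R A : Type*) [CommRing R] [CommRing A] [Algebra R A] (n : Type*) [Fintype n]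
  [DecidableEq n]

def scalarTraceDetMatrices : Set (Matrix n n A) :=
  {σ | (∃ z : R, σ.trace = algebraMap R A z) ∧ ∃ z : R, σ.det = algebraMap R A z}

variable {R A n}

theorem AlgEquiv.card_scalarTraceDetMatrices {B : Type*} [CommRing B] [Algebra R B]
    (e : A ≃ₐ[R] B) :
    Nat.card (scalarTraceDetMatrices R A n) = Nat.card (scalarTraceDetMatrices R B n) := by
  refine Nat.card_congr (e.mapMatrix.toEquiv.subtypeEquiv fun σ => ?_)
  simp only [scalarTraceDetMatrices, Set.mem_ofPred_eq, AlgEquiv.toEquiv_eq_coe, EquivLike.coe_coe,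
    AlgEquiv.mapMatrix_apply]
  have hdet : (σ.map e).det = e σ.det := (e.map_det σ).symm
  rw [← AddMonoidHom.map_trace, hdet]
  simp only [← e.commutes, e.injective.eq_iff]

theorem QuadraticAlgebra.mem_scalarTraceDetMatrices_iff {a b : R}
    {σ : Matrix n n (QuadraticAlgebra R a b)} :
    σ ∈ scalarTraceDetMatrices R _ n ↔ σ.trace.im = 0 ∧ σ.det.im = 0 := by
  have key (z : QuadraticAlgebra R a b) : (∃ r, z = algebraMap R _ r) ↔ z.im = 0 :=
    ⟨by rintro ⟨r, rfl⟩; rfl, fun h => ⟨z.re, QuadraticAlgebra.ext rfl h⟩⟩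
  simp only [scalarTraceDetMatrices, Set.mem_ofPred_eq, key]

theorem QuadraticAlgebra.mem_scalarTraceDetMatrices_fin_two_iff {a : R}
    {σ : Matrix (Fin 2) (Fin 2) (QuadraticAlgebra R a 0)} :
    σ ∈ scalarTraceDetMatrices R _ (Fin 2) ↔ (σ 0 0).im + (σ 1 1).im = 0 ∧
      (σ 0 1).re * (σ 1 0).im + (σ 0 1).im * (σ 1 0).re =
        (σ 1 1).im * ((σ 0 0).re - (σ 1 1).re) := by
  rw [mem_scalarTraceDetMatrices_iff, trace_fin_two, det_fin_two, im_add, im_sub, im_mul, im_mul]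
  refine and_congr_right fun htr => ⟨fun hdet => ?_, fun h => ?_⟩
  · linear_combination (-1 : R) * hdet + (σ 1 1).re * htr
  · linear_combination (-1 : R) * h + (σ 1 1).re * htr

theorem QuadraticAlgebra.card_scalarTraceDetMatrices_le [Fintype R] [DecidableEq R] (a : R)
    {M : ℕ} (hM : ∀ t : R, #(hyperbolicLevelSet t) ≤ M) :
    Nat.card (scalarTraceDetMatrices R (QuadraticAlgebra R a 0) (Fin 2)) ≤
      Fintype.card R ^ 3 * M := by
  let T : Finset (Σ _ : R × R × R, R × R × R × R) :=
    univ.sigma fun p => hyperbolicLevelSet (p.2.2 * (p.1 - p.2.1))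
  calc Nat.card (scalarTraceDetMatrices R (QuadraticAlgebra R a 0) (Fin 2))
      ≤ Nat.card T := by
        refine Nat.card_le_card_of_injective (fun σ => ⟨⟨((σ.1 0 0).re, (σ.1 1 1).re, (σ.1 1 1).im),
          ((σ.1 0 1).re, (σ.1 1 0).im, (σ.1 0 1).im, (σ.1 1 0).re)⟩, ?_⟩) ?_
        · simpa [T] using (mem_scalarTraceDetMatrices_fin_two_iff.1 σ.2).2
        · rintro ⟨σ, hσ⟩ ⟨σ', hσ'⟩ h
          simp only [Sigma.mk.injEq, Subtype.mk.injEq, Prod.mk.injEq, heq_eq_eq] at h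
          obtain ⟨⟨h00, h11, h11'⟩, h01, h10', h01', h10⟩ := h
          have htr := (mem_scalarTraceDetMatrices_fin_two_iff.1 hσ).1
          have htr' := (mem_scalarTraceDetMatrices_fin_two_iff.1 hσ').1
          have e00 : σ 0 0 = σ' 0 0 :=
            QuadraticAlgebra.ext h00 (by linear_combination htr - htr' - h11')
          have e01 : σ 0 1 = σ' 0 1 := QuadraticAlgebra.ext h01 h01'
          have e10 : σ 1 0 = σ' 1 0 := QuadraticAlgebra.ext h10 h10'
          have e11 : σ 1 1 = σ' 1 1 := QuadraticAlgebra.ext h11 h11'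
          refine Subtype.ext (Matrix.ext fun i j => ?_)
          fin_cases i <;> fin_cases j <;> assumption
    _ = ∑ p : R × R × R, #(hyperbolicLevelSet (p.2.2 * (p.1 - p.2.1))) := by
        rw [Nat.card_eq_finsetCard, card_sigma]
    _ ≤ ∑ _p : R × R × R, M := sum_le_sum fun p _ => hM _
    _ = Fintype.card R ^ 3 * M := by
        rw [sum_const, card_univ, smul_eq_mul, Fintype.card_prod, Fintype.card_prod]; ring

end ScalarTraceDet

theorem stmt_15_general (ℓ k : ℕ) (hℓ : ℓ.Prime) (D : ℤ) :
    Nat.card {σ : Matrix (Fin 2) (Fin 2) (InertRing ℓ k D) |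
        (∃ z : ZMod (ℓ ^ k), σ.trace = algebraMap (ZMod (ℓ ^ k)) (InertRing ℓ k D) z) ∧
        ∃ z : ZMod (ℓ ^ k), σ.det = algebraMap (ZMod (ℓ ^ k)) (InertRing ℓ k D) z} ≤
      3 * ℓ ^ (6 * k) := by
  have : NeZero ℓ := ⟨hℓ.ne_zero⟩
  change Nat.card (scalarTraceDetMatrices (ZMod (ℓ ^ k)) (InertRing ℓ k D) (Fin 2)) ≤ _
  rw [(AdjoinRoot.equivQuadraticAlgebra _).card_scalarTraceDetMatrices]
  calc _ ≤ Fintype.card (ZMod (ℓ ^ k)) ^ 3 * (2 * ℓ ^ (3 * k)) :=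
        QuadraticAlgebra.card_scalarTraceDetMatrices_le _
          (ZMod.card_hyperbolicLevelSet_prime_pow_le k hℓ)
    _ = 2 * ℓ ^ (6 * k) := by rw [ZMod.card]; ring
    _ ≤ 3 * ℓ ^ (6 * k) := by gcongr; norm_num

/-- For any prime `ℓ`, `k ≥ 1` and integer `D`, the set `Mᵗ_{ℓᵏ}` of 2×2
matrices over `R_k` whose trace and determinant lie in the image of `ℤ/ℓᵏℤ`
has at most `3·ℓ^(6k)` elements. -/
theorem stmt_15 (ℓ k : ℕ) (hℓ : ℓ.Prime) (hk : 1 ≤ k) (D : ℤ) :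
    Nat.card {σ : Matrix (Fin 2) (Fin 2) (InertRing ℓ k D) |
        (∃ z : ZMod (ℓ ^ k), σ.trace = algebraMap (ZMod (ℓ ^ k)) (InertRing ℓ k D) z) ∧
        ∃ z : ZMod (ℓ ^ k), σ.det = algebraMap (ZMod (ℓ ^ k)) (InertRing ℓ k D) z} ≤
      3 * ℓ ^ (6 * k) :=
  stmt_15_general ℓ k hℓ D
end

section
/- Let ℓ be a prime, k ≥ 1, and D any integer. Let R_k = (ℤ/ℓᵏℤ)[X]/(X² − D) and 𝒜_{ℓᵏ} = {σ ∈ GL₂(R_k) | det σ lies in the image of (ℤ/ℓᵏℤ)^×}. Then #𝒜_{ℓᵏ} ≥ ℓ^{7k−3}(ℓ−1)². -/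
/-!
The matrices `[[a, b], [c, a⁻¹ (u + b c)]]` with `u ∈ (ℤ/ℓᵏℤ)ˣ`, `a ∈ R_kˣ` and `b, c ∈ R_k` are
pairwise distinct and have determinant `u`, so `#𝒜_{ℓᵏ} ≥ φ(ℓᵏ) · #R_kˣ · ℓ⁴ᵏ`. Since `R_k` is free
on `1, θ` over `ℤ/ℓᵏℤ`, the elements `r + s θ` with `r` a unit and `s` nilpotent (e.g. `s ∈ ℓ ℤ/ℓᵏℤ`)
are distinct units, so `#R_kˣ ≥ φ(ℓᵏ) · ℓ^(k-1)`, and `φ(ℓᵏ) = ℓ^(k-1) (ℓ - 1)`.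
-/

open Matrix Polynomial

namespace AdjoinRoot

variable {A : Type*} [CommRing A] {f : A[X]}

theorem algebraMap_injective_of_monic (hf : f.Monic) (hdeg : f.natDegree ≠ 0) :
    Function.Injective (algebraMap A (AdjoinRoot f)) := by
  refine (injective_iff_map_eq_zero _).2 fun a ha => ?_
  by_contra h0
  exact mk_ne_zero_of_natDegree_lt hf (C_ne_zero.2 h0) (by rw [natDegree_C]; omega) ha

theorem injective_algebraMap_add_mul_root (hf : f.Monic) (hdeg : 1 < f.natDegree) :
    Function.Injective fun p : A × A =>
      algebraMap A (AdjoinRoot f) p.1 + algebraMap A (AdjoinRoot f) p.2 * root f := by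
  rintro ⟨r, s⟩ ⟨r', s'⟩ h
  set g : A[X] := C (s - s') * X + C (r - r')
  have hg : mk f g = 0 := by
    simp only [g, map_add, _root_.map_mul, mk_C, mk_X, map_sub, algebraMap_eq] at h ⊢
    linear_combination h
  have hg0 : g = 0 := by
    by_contra h0
    exact mk_ne_zero_of_natDegree_lt hf h0 ((natDegree_linear_le).trans_lt (by omega)) hg
  have h0 : r - r' = 0 := by simpa [g] using congrArg (coeff · 0) hg0
  have h1 : s - s' = 0 := by simpa [g] using congrArg (coeff · 1) hg0
  rw [sub_eq_zero.1 h0, sub_eq_zero.1 h1]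

theorem natCard_eq_pow_natDegree_s16 (hf : f.Monic) :
    Nat.card (AdjoinRoot f) = Nat.card A ^ f.natDegree := by
  rw [Nat.card_congr (powerBasis' hf).basis.equivFun.toEquiv, Nat.card_fun, Nat.card_fin,
    powerBasis'_dim]

theorem finite_of_monic [Finite A] (hf : f.Monic) : Finite (AdjoinRoot f) :=
  Nat.finite_of_card_ne_zero <| by
    rw [natCard_eq_pow_natDegree_s16 hf]; exact pow_ne_zero _ Nat.card_pos.ne'

theorem card_units_mul_card_nilpotent_le_card_units [Finite A] (hf : f.Monic)
    (hdeg : 1 < f.natDegree) :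
    Nat.card Aˣ * Nat.card {s : A // IsNilpotent s} ≤ Nat.card (AdjoinRoot f)ˣ := by
  have := finite_of_monic hf
  have hunit (a : Aˣ) (s : {s : A // IsNilpotent s}) :
      IsUnit (algebraMap A (AdjoinRoot f) a + algebraMap A (AdjoinRoot f) s * root f) :=
    ((Commute.all _ _).isNilpotent_mul_right (s.2.map _)).isUnit_add_left_of_commute
      (a.isUnit.map _) (Commute.all _ _)
  rw [← Nat.card_prod]
  refine Nat.card_le_card_of_injective (fun p => (hunit p.1 p.2).unit) fun p q h => ?_
  have h' : ((p.1 : A), (p.2 : A)) = ((q.1 : A), (q.2 : A)) :=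
    injective_algebraMap_add_mul_root hf hdeg (congrArg Units.val h :)
  rw [Prod.mk.injEq] at h'
  exact Prod.ext (Units.ext h'.1) (Subtype.ext h'.2)

end AdjoinRoot

section GLFinTwo

variable {R : Type*} [CommRing R]

theorem det_fin_two_of_units_inv_mul (d a : Rˣ) (b c : R) :
    (!![(a : R), b; c, ↑a⁻¹ * (d + b * c)]).det = d := by
  rw [det_fin_two_of, ← mul_assoc, Units.mul_inv, one_mul, add_sub_cancel_right]

noncomputable def glFinTwoOfDet (d a : Rˣ) (b c : R) : GL (Fin 2) R :=
  GeneralLinearGroup.mk'' !![(a : R), b; c, ↑a⁻¹ * (d + b * c)]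
    (by rw [det_fin_two_of_units_inv_mul]; exact d.isUnit)

theorem coe_glFinTwoOfDet (d a : Rˣ) (b c : R) :
    (glFinTwoOfDet d a b c : Matrix (Fin 2) (Fin 2) R) = !![(a : R), b; c, ↑a⁻¹ * (d + b * c)] :=
  rfl

theorem det_glFinTwoOfDet (d a : Rˣ) (b c : R) :
    (glFinTwoOfDet d a b c : Matrix (Fin 2) (Fin 2) R).det = d := by
  rw [coe_glFinTwoOfDet, det_fin_two_of_units_inv_mul]

theorem glFinTwoOfDet_injective :
    Function.Injective fun t : Rˣ × Rˣ × R × R => glFinTwoOfDet t.1 t.2.1 t.2.2.1 t.2.2.2 := by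
  rintro ⟨d, a, b, c⟩ ⟨d', a', b', c'⟩ h
  have hM := congrArg (fun σ : GL (Fin 2) R => (σ : Matrix (Fin 2) (Fin 2) R)) h
  have hd : d = d' := Units.ext <| by simpa only [det_glFinTwoOfDet] using congrArg det hM
  simp only [coe_glFinTwoOfDet] at hM
  have ha : a = a' := Units.ext (congrFun₂ hM 0 0)
  have hb : b = b' := congrFun₂ hM 0 1
  have hc : c = c' := congrFun₂ hM 1 0
  rw [hd, ha, hb, hc]

variable {A : Type*} [CommRing A] [Algebra A R]

theorem card_units_mul_card_units_mul_card_sq_le_card_det_eq_algebraMap [Finite R]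
    (hA : Function.Injective (algebraMap A R)) :
    Nat.card Aˣ * Nat.card Rˣ * Nat.card R ^ 2 ≤
      Nat.card {σ : GL (Fin 2) R |
        ∃ u : Aˣ, (σ : Matrix (Fin 2) (Fin 2) R).det = algebraMap A R u} := by
  let ι : Aˣ → Rˣ := Units.map (algebraMap A R)
  have hι : Function.Injective ι := fun u v h => Units.ext (hA (congrArg Units.val h))
  calc Nat.card Aˣ * Nat.card Rˣ * Nat.card R ^ 2 = Nat.card (Aˣ × Rˣ × R × R) := by
        simp only [Nat.card_prod]; ring
    _ ≤ _ := Nat.card_le_card_of_injective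
        (fun t => ⟨glFinTwoOfDet (ι t.1) t.2.1 t.2.2.1 t.2.2.2, t.1, det_glFinTwoOfDet _ _ _ _⟩)
        fun t t' h => (glFinTwoOfDet_injective.comp
          (Prod.map_injective.2 ⟨hι, Function.injective_id⟩)) (congrArg Subtype.val h)

end GLFinTwo

theorem ZMod.pow_le_card_isNilpotent {ℓ : ℕ} (hℓ : 0 < ℓ) (k : ℕ) :
    ℓ ^ k ≤ Nat.card {x : ZMod (ℓ ^ (k + 1)) // IsNilpotent x} := by
  have : NeZero (ℓ ^ k) := ⟨by positivity⟩
  have : NeZero (ℓ ^ (k + 1)) := ⟨by positivity⟩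
  have hlt (c : ZMod (ℓ ^ k)) : ℓ * c.val < ℓ ^ (k + 1) := by
    rw [pow_succ']; exact Nat.mul_lt_mul_of_pos_left c.val_lt hℓ
  have hnil (c : ZMod (ℓ ^ k)) : IsNilpotent ((ℓ * c.val : ℕ) : ZMod (ℓ ^ (k + 1))) :=
    ⟨k + 1, by rw [← Nat.cast_pow, mul_pow, Nat.cast_mul, ZMod.natCast_self, zero_mul]⟩
  rw [← Nat.card_zmod (ℓ ^ k)]
  refine Nat.card_le_card_of_injective (fun c => ⟨_, hnil c⟩) fun c c' h => ?_
  have := congrArg (fun x : {x : ZMod (ℓ ^ (k + 1)) // IsNilpotent x} => x.1.val) h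
  simp only [ZMod.val_natCast_of_lt (hlt _)] at this
  exact ZMod.val_injective _ (Nat.eq_of_mul_eq_mul_left hℓ this)

/-- For any prime `ℓ`, `k ≥ 1` and integer `D`, the set `𝒜_{ℓᵏ}` of
`σ ∈ GL₂(R_k)` whose determinant lies in the image of `(ℤ/ℓᵏℤ)ˣ` has at least
`ℓ^(7k−3)(ℓ−1)²` elements. -/
theorem stmt_16 (ℓ k : ℕ) (hℓ : ℓ.Prime) (hk : 1 ≤ k) (D : ℤ) :
    ℓ ^ (7 * k - 3) * (ℓ - 1) ^ 2 ≤
      Nat.card {σ : GL (Fin 2) (InertRing ℓ k D) |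
        ∃ u : (ZMod (ℓ ^ k))ˣ,
          (σ : Matrix (Fin 2) (Fin 2) (InertRing ℓ k D)).det =
            algebraMap (ZMod (ℓ ^ k)) (InertRing ℓ k D) (u : ZMod (ℓ ^ k))} := by
  obtain ⟨n, rfl⟩ : ∃ n, k = n + 1 := ⟨k - 1, by omega⟩
  have : Fact (1 < ℓ ^ (n + 1)) := ⟨Nat.one_lt_pow n.succ_ne_zero hℓ.one_lt⟩
  have hf : ((X : (ZMod (ℓ ^ (n + 1)))[X]) ^ 2 - C (D : ZMod (ℓ ^ (n + 1)))).Monic :=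
    monic_X_pow_sub_C _ two_ne_zero
  have hdeg := natDegree_X_pow_sub_C (n := 2) (r := (D : ZMod (ℓ ^ (n + 1))))
  have := AdjoinRoot.finite_of_monic hf
  have hunits : Nat.card (ZMod (ℓ ^ (n + 1)))ˣ = ℓ ^ n * (ℓ - 1) := by
    rw [Nat.card_eq_fintype_card, ZMod.card_units_eq_totient, Nat.totient_prime_pow_succ hℓ]
  have hcard : Nat.card (InertRing ℓ (n + 1) D) = (ℓ ^ (n + 1)) ^ 2 := by
    rw [AdjoinRoot.natCard_eq_pow_natDegree_s16 hf, hdeg, Nat.card_zmod]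
  calc ℓ ^ (7 * (n + 1) - 3) * (ℓ - 1) ^ 2
        = Nat.card (ZMod (ℓ ^ (n + 1)))ˣ * (Nat.card (ZMod (ℓ ^ (n + 1)))ˣ * ℓ ^ n) *
            Nat.card (InertRing ℓ (n + 1) D) ^ 2 := by
        rw [hunits, hcard, show 7 * (n + 1) - 3 = 7 * n + 4 by omega]; ring
    _ ≤ Nat.card (ZMod (ℓ ^ (n + 1)))ˣ * Nat.card (InertRing ℓ (n + 1) D)ˣ *
            Nat.card (InertRing ℓ (n + 1) D) ^ 2 := by
        gcongr
        exact (Nat.mul_le_mul_left _ (ZMod.pow_le_card_isNilpotent hℓ.pos n)).trans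
          (AdjoinRoot.card_units_mul_card_nilpotent_le_card_units hf (by omega))
    _ ≤ _ := card_units_mul_card_units_mul_card_sq_le_card_det_eq_algebraMap
        (AdjoinRoot.algebraMap_injective_of_monic hf (by omega))
end
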